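/- arXiv:2405.03540 — 5 statements merged into one kernel-verified Lean document; each statement's English description precedes it below -/
import Mathlib

section
/- As G tends to infinity, for each residue r in {4, 6, 8}, the ratio Σ_r(G) / Σ_2(G) tends to 1; that is, the asymptotic relative populations of the gap-teams r = 4, 6, 8 modulo 10 equal that of the team r = 2. -/
open Filter

/-- The asymptotic relative population of the even gap `g`:
`W(g) = ∏_{q odd prime, q ∣ g} (q-1)/(q-2)`. -/
noncomputable def W (g : ℕ) : ℝ :=
  ∏ q ∈ g.primeFactors.filter (fun q => q ≠ 2), (((q : ℝ) - 1) / ((q : ℝ) - 2))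

/-- `Σ_r(G)`: the sum of `W(g)` over even integers `g` with `0 < g ≤ G`
and `g ≡ r (mod 10)`. -/
noncomputable def Sig (r : ℕ) (G : ℝ) : ℝ :=
  ∑ g ∈ (Finset.Icc 1 ⌊G⌋₊).filter (fun g => Even g ∧ g % 10 = r), W g

open Finset

noncomputable def hh (d : ℕ) : ℝ := ∏ q ∈ d.primeFactors, (1 / ((q:ℝ) - 2))


-- counting lemma
lemma count_mod (N m k : ℕ) (hk1 : 1 ≤ k) (hkm : k < m) :
    ((Finset.Icc 1 N).filter (fun g => g % m = k)).card = (N + m - k) / m := by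
  induction N with
  | zero =>
    simp only [Finset.Icc_eq_empty_of_lt (by norm_num : (0:ℕ) < 1)]
    rw [Finset.filter_empty, Finset.card_empty, Nat.zero_add,
      Nat.div_eq_of_lt (by omega)]
  | succ n ih =>
    rw [← Finset.insert_Icc_right_eq_Icc_add_one (by omega : 1 ≤ n + 1), Finset.filter_insert]
    have harg : n + 1 + m - k = (n + m - k) + 1 := by omega
    rw [harg, Nat.succ_div]
    have hdvd : m ∣ (n + m - k) + 1 ↔ (n + 1) % m = k := by
      have h1 : (n + m - k) + 1 = (n + 1) + (m - k) := by omega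
      rw [h1]
      constructor
      · intro h
        have h2 : (n + 1) + (m - k) ≡ 0 [MOD m] := (Nat.modEq_zero_iff_dvd).2 h
        have h3 : (n + 1) + (m - k) + k ≡ 0 + k [MOD m] := h2.add_right k
        have h4 : (n + 1) + (m - k) + k = (n + 1) + m := by omega
        rw [h4] at h3
        have h5 : (n + 1) + m ≡ (n+1) [MOD m] := by
          simpa using (Nat.ModEq.refl (n+1)).add_right m |>.symm |>.trans
            ((Nat.add_modEq_right))
        have h6 : (n + 1) ≡ k [MOD m] := by simpa using h5.symm.trans h3
        have := h6
        unfold Nat.ModEq at this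
        rw [Nat.mod_eq_of_lt hkm] at this
        exact this
      · intro h
        have h6 : (n + 1) ≡ k [MOD m] := by
          unfold Nat.ModEq; rw [Nat.mod_eq_of_lt hkm]; exact h
        have h7 : (n + 1) + (m - k) ≡ k + (m - k) [MOD m] := h6.add_right _
        have h8 : k + (m - k) = m := by omega
        rw [h8] at h7
        have h9 : m ≡ 0 [MOD m] := (Nat.modEq_zero_iff_dvd).2 dvd_rfl
        exact (Nat.modEq_zero_iff_dvd).1 (h7.trans h9)
    by_cases hc : (n + 1) % m = k
    · rw [if_pos hc, Finset.card_insert_of_notMem (by simp), ih, if_pos (hdvd.2 hc)]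
    · rw [if_neg hc, ih, if_neg (fun h => hc (hdvd.1 h)), Nat.add_zero]


lemma crt_char (d r : ℕ) (hd : d % 2 = 1) (h5 : ¬ 5 ∣ d) (hr1 : 1 ≤ r) (hr10 : r < 10)
    (hr2 : r % 2 = 0) (hr5 : ¬ 5 ∣ r) :
    ∃ k, 1 ≤ k ∧ k < 10 * d ∧ ∀ g : ℕ, ((Even g ∧ g % 10 = r) ∧ d ∣ g ↔ g % (10 * d) = k) := by
  have hd0 : d ≠ 0 := by omega
  have co : Nat.Coprime 10 d := by
    have h2 : Nat.Coprime 2 d := by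
      exact Nat.coprime_two_left.2 (Nat.odd_iff.2 hd)
    have h5' : Nat.Coprime 5 d := (Nat.Prime.coprime_iff_not_dvd (by norm_num)).2 h5
    have : (2 * 5 : ℕ) = 10 := by norm_num
    rw [← this]; exact Nat.Coprime.mul h2 h5'
  set K := Nat.chineseRemainder co r 0 with hK
  set k := (K : ℕ) with hk
  have hk10 : k ≡ r [MOD 10] := K.2.1
  have hkd : k ≡ 0 [MOD d] := K.2.2
  have hklt : k < 10 * d := Nat.chineseRemainder_lt_mul co r 0 (by norm_num) hd0
  have hkmod10 : k % 10 = r := by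
    have := hk10; unfold Nat.ModEq at this; rwa [Nat.mod_eq_of_lt hr10] at this
  have hkd' : d ∣ k := by
    have := hkd; unfold Nat.ModEq at this; simpa [Nat.dvd_iff_mod_eq_zero] using this
  refine ⟨k, ?_, hklt, ?_⟩
  · rcases Nat.eq_zero_or_pos k with h | h
    · exfalso; rw [h] at hkmod10; omega
    · exact h
  · intro g
    constructor
    · rintro ⟨⟨-, hg10⟩, hgd⟩
      have e10 : g ≡ k [MOD 10] := by
        unfold Nat.ModEq; rw [hg10, hkmod10]
      have ed : g ≡ k [MOD d] := by
        unfold Nat.ModEq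
        rw [(Nat.mod_eq_zero_of_dvd hgd),
          (Nat.mod_eq_zero_of_dvd hkd')]
      have := (Nat.modEq_and_modEq_iff_modEq_mul co).1 ⟨e10, ed⟩
      unfold Nat.ModEq at this
      rwa [Nat.mod_eq_of_lt hklt] at this
    · intro h
      have e : g ≡ k [MOD 10 * d] := by
        unfold Nat.ModEq; rw [h, Nat.mod_eq_of_lt hklt]
      obtain ⟨e10, ed⟩ := (Nat.modEq_and_modEq_iff_modEq_mul co).2 e
      have hg10 : g % 10 = r := by
        have := e10; unfold Nat.ModEq at this; rw [hkmod10] at this; exact this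
      refine ⟨⟨?_, hg10⟩, ?_⟩
      · rw [Nat.even_iff]
        have : g % 10 % 2 = g % 2 := Nat.mod_mod_of_dvd g (by norm_num)
        omega
      · have := ed; unfold Nat.ModEq at this
        rw [(Nat.mod_eq_zero_of_dvd hkd')] at this
        exact Nat.dvd_iff_mod_eq_zero.2 this

lemma three_le_of_odd_primeFactor {d q : ℕ} (hd : d % 2 = 1) (hq : q ∈ d.primeFactors) :
    3 ≤ q := by
  have hqp : q.Prime := Nat.prime_of_mem_primeFactors hq
  have hq2 : q ≠ 2 := by
    rintro rfl
    have := Nat.dvd_of_mem_primeFactors hq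
    omega
  exact hqp.two_le.lt_of_ne (Ne.symm hq2)

lemma hh_nonneg {d : ℕ} (hd : d % 2 = 1) : 0 ≤ hh d := by
  rw [hh]; apply Finset.prod_nonneg
  intro q hq
  have h3 : 3 ≤ q := three_le_of_odd_primeFactor hd hq
  have : (3:ℝ) ≤ q := by exact_mod_cast h3
  exact div_nonneg zero_le_one (by linarith)

lemma squarefree_prod_primes {t : Finset ℕ} (h : ∀ p ∈ t, p.Prime) :
    Squarefree (∏ p ∈ t, p) := by
  classical
  induction t using Finset.induction_on with
  | empty => simpa using squarefree_one
  | @insert a s ha ih =>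
    rw [Finset.prod_insert ha]
    have hap : a.Prime := h a (Finset.mem_insert_self a s)
    have hco : Nat.Coprime a (∏ p ∈ s, p) := by
      apply Nat.Coprime.prod_right
      intro p hp
      exact (Nat.coprime_primes hap (h p (Finset.mem_insert_of_mem hp))).2
        (fun he => ha (he ▸ hp))
    exact (Nat.squarefree_mul hco).2 ⟨hap.prime.squarefree,
      ih (fun p hp => h p (Finset.mem_insert_of_mem hp))⟩

lemma W_eq (g : ℕ) (hg : g ≠ 0) :
    W g = ∑ d ∈ g.divisors.filter (fun d => Squarefree d ∧ d % 2 = 1), hh d := by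
  classical
  have key : ∀ q ∈ g.primeFactors.filter (fun q => q ≠ 2),
      ((q : ℝ) - 1) / ((q : ℝ) - 2) = 1 / ((q:ℝ) - 2) + 1 := by
    intro q hq
    simp only [Finset.mem_filter] at hq
    have hqp := Nat.prime_of_mem_primeFactors hq.1
    have h3 : 3 ≤ q := hqp.two_le.lt_of_ne (Ne.symm hq.2)
    have hne : (q:ℝ) - 2 ≠ 0 := by
      have : (3:ℝ) ≤ q := by exact_mod_cast h3
      linarith
    field_simp
    ring
  rw [W, Finset.prod_congr rfl key, Finset.prod_add]
  simp only [Finset.prod_const_one, mul_one]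
  set F := g.primeFactors.filter (fun q => q ≠ 2) with hF
  have hFprime : ∀ t : Finset ℕ, t ∈ F.powerset → ∀ p ∈ t, p.Prime := by
    intro t ht p hp
    rw [Finset.mem_powerset] at ht
    exact Nat.prime_of_mem_primeFactors (Finset.mem_filter.1 (ht hp)).1
  refine Finset.sum_nbij' (fun t => ∏ q ∈ t, q) (fun d => d.primeFactors) ?_ ?_ ?_ ?_ ?_
  · intro t ht
    have hprime := hFprime t ht
    rw [Finset.mem_powerset] at ht
    have hdvd : (∏ q ∈ t, q) ∣ g := by
      refine Finset.prod_primes_dvd g (fun p hp => (hprime p hp).prime) ?_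
      exact fun p hp => Nat.dvd_of_mem_primeFactors (Finset.mem_filter.1 (ht hp)).1
    rw [Finset.mem_filter, Nat.mem_divisors]
    refine ⟨⟨hdvd, hg⟩, squarefree_prod_primes hprime, ?_⟩
    rw [← Nat.odd_iff]
    refine Finset.prod_induction _ Odd (fun a b ha hb => ha.mul hb) odd_one ?_
    intro p hp
    exact (hprime p hp).odd_of_ne_two (Finset.mem_filter.1 (ht hp)).2
  · -- j maps divisors into powerset
    intro d hd
    rw [Finset.mem_filter, Nat.mem_divisors] at hd
    obtain ⟨⟨hdvd, -⟩, hsf, hodd⟩ := hd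
    rw [Finset.mem_powerset]
    intro q hq
    rw [hF, Finset.mem_filter]
    constructor
    · exact Nat.mem_primeFactors.2 ⟨Nat.prime_of_mem_primeFactors hq,
        (Nat.dvd_of_mem_primeFactors hq).trans hdvd, hg⟩
    · intro he
      have h3 := three_le_of_odd_primeFactor hodd hq
      omega
  · -- left inverse
    intro t ht
    exact Nat.primeFactors_prod (hFprime t ht)
  · -- right inverse
    intro d hd
    rw [Finset.mem_filter] at hd
    exact Nat.prod_primeFactors_of_squarefree hd.2.1
  · -- values agree
    intro t ht
    rw [hh, Nat.primeFactors_prod (hFprime t ht)]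

lemma sqrt_prod (s : Finset ℕ) : Real.sqrt (∏ q ∈ s, (q:ℝ)) = ∏ q ∈ s, Real.sqrt q := by
  classical
  induction s using Finset.induction_on with
  | empty => simp
  | @insert a t ha ih =>
    rw [Finset.prod_insert ha, Finset.prod_insert ha, Real.sqrt_mul (by positivity), ih]

lemma hh_le {d : ℕ} (hsf : Squarefree d) (hodd : d % 2 = 1) :
    hh d ≤ Real.sqrt 3 / Real.sqrt d := by
  have hd0 : d ≠ 0 := hsf.ne_zero
  have hsd : 0 < Real.sqrt d := Real.sqrt_pos.2 (by positivity)
  rw [le_div_iff₀ hsd]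
  have hrw : (d:ℝ) = ∏ q ∈ d.primeFactors, (q:ℝ) := by
    rw [← Nat.cast_prod]
    exact_mod_cast congrArg (fun n => ((n:ℕ):ℝ)) (Nat.prod_primeFactors_of_squarefree hsf).symm
  calc hh d * Real.sqrt d = ∏ q ∈ d.primeFactors, (1 / ((q:ℝ) - 2) * Real.sqrt q) := by
        rw [hh, hrw, sqrt_prod, Finset.prod_mul_distrib]
    _ ≤ ∏ q ∈ d.primeFactors, (if q = 3 then Real.sqrt 3 else 1) := by
        apply Finset.prod_le_prod
        · intro q hq
          have h3 : 3 ≤ q := three_le_of_odd_primeFactor hodd hq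
          have h3' : (3:ℝ) ≤ q := by exact_mod_cast h3
          have hpos : (0:ℝ) < (q:ℝ) - 2 := by linarith
          positivity
        · intro q hq
          have h3 : 3 ≤ q := three_le_of_odd_primeFactor hodd hq
          by_cases hq3 : q = 3
          · subst hq3
            simp only [if_pos rfl]
            norm_num
          · rw [if_neg hq3]
            have h5 : 5 ≤ q := by
              have hqp := Nat.prime_of_mem_primeFactors hq
              rcases Nat.lt_or_ge q 5 with h | h
              · interval_cases q <;> simp_all <;> omega
              · exact h
            have h5' : (5:ℝ) ≤ q := by exact_mod_cast h5
            rw [one_div, mul_comm, ← div_eq_mul_inv, div_le_one (by linarith)]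
            have h1 : Real.sqrt q ≤ Real.sqrt ((q:ℝ)^2/4) := by
              apply Real.sqrt_le_sqrt
              nlinarith
            calc Real.sqrt q ≤ Real.sqrt ((q:ℝ)^2/4) := h1
              _ = (q:ℝ)/2 := by
                  rw [show ((q:ℝ)^2/4) = ((q:ℝ)/2)^2 by ring, Real.sqrt_sq (by linarith)]
              _ ≤ (q:ℝ) - 2 := by linarith
    _ ≤ Real.sqrt 3 := by
        rw [Finset.prod_ite_eq' d.primeFactors 3 (fun _ => Real.sqrt 3)]
        split
        · exact le_refl _
        · exact (by norm_num : (1:ℝ) ≤ Real.sqrt 3 ∨ True).elim id (fun _ => by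
            nlinarith [Real.sq_sqrt (by norm_num : (3:ℝ) ≥ 0), Real.sqrt_nonneg 3])

lemma sum_one_div_sqrt (N : ℕ) :
    ∑ d ∈ Finset.Icc 1 N, 1 / Real.sqrt d ≤ 2 * Real.sqrt N := by
  induction N with
  | zero => simp
  | succ n ih =>
    rw [← Finset.insert_Icc_right_eq_Icc_add_one (by omega : 1 ≤ n + 1), Finset.sum_insert (by simp)]
    have hb : Real.sqrt (n+1) > 0 := Real.sqrt_pos.2 (by positivity)
    have key : 1 / Real.sqrt ((n:ℝ)+1) + 2 * Real.sqrt n ≤ 2 * Real.sqrt ((n:ℝ)+1) := by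
      have ha : Real.sqrt n ≥ 0 := Real.sqrt_nonneg _
      have h1 : Real.sqrt n ^ 2 = n := Real.sq_sqrt (by positivity)
      have h2 : Real.sqrt ((n:ℝ)+1) ^ 2 = (n:ℝ)+1 := Real.sq_sqrt (by positivity)
      rw [div_add' _ _ _ (ne_of_gt hb), div_le_iff₀ hb]
      nlinarith [sq_nonneg (Real.sqrt n - Real.sqrt ((n:ℝ)+1))]
    push_cast
    linarith [ih]

open Classical in
noncomputable def Mcard (r d N : ℕ) : ℕ :=
  ((Finset.Icc 1 N).filter (fun g => (Even g ∧ g % 10 = r) ∧ d ∣ g)).card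

open Classical in
lemma Sig_eq (r : ℕ) (G : ℝ) :
    Sig r G = ∑ d ∈ Finset.Icc 1 ⌊G⌋₊,
      if Squarefree d ∧ d % 2 = 1 then hh d * (Mcard r d ⌊G⌋₊) else 0 := by
  classical
  set N := ⌊G⌋₊ with hN
  rw [Sig]
  have step1 : ∀ g ∈ (Finset.Icc 1 N).filter (fun g => Even g ∧ g % 10 = r),
      W g = ∑ d ∈ Finset.Icc 1 N,
        if (Squarefree d ∧ d % 2 = 1) ∧ d ∣ g then hh d else 0 := by
    intro g hg
    rw [Finset.mem_filter, Finset.mem_Icc] at hg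
    have hg0 : g ≠ 0 := by omega
    rw [W_eq g hg0, ← Finset.sum_filter]
    apply Finset.sum_congr _ (fun _ _ => rfl)
    ext d
    simp only [Finset.mem_filter, Nat.mem_divisors, Finset.mem_Icc]
    constructor
    · rintro ⟨⟨hdvd, -⟩, hsf, hodd⟩
      have hd1 : 1 ≤ d := Nat.pos_of_ne_zero (by rintro rfl; exact hg0 (Nat.eq_zero_of_zero_dvd hdvd))
      exact ⟨⟨hd1, (Nat.le_of_dvd (by omega) hdvd).trans hg.1.2⟩, ⟨hsf, hodd⟩, hdvd⟩
    · rintro ⟨-, ⟨hsf, hodd⟩, hdvd⟩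
      exact ⟨⟨hdvd, hg0⟩, hsf, hodd⟩
  rw [Finset.sum_congr rfl step1, Finset.sum_comm]
  apply Finset.sum_congr rfl
  intro d _
  by_cases hP : Squarefree d ∧ d % 2 = 1
  · rw [if_pos hP]
    simp only [hP, true_and]
    rw [← Finset.sum_filter, Finset.filter_filter, Finset.sum_const, Mcard,
      nsmul_eq_mul, mul_comm]
  · simp [hP]

lemma div_close {x y m : ℕ} (hxy : x ≤ y) (h : y < x + m) : y / m ≤ x / m + 1 := by
  have hm : 1 ≤ m := by omega
  calc y / m ≤ (x + m) / m := Nat.div_le_div_right (by omega)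
    _ = x / m + 1 := by rw [Nat.add_div_right _ (by omega)]

open Classical in
lemma Mcard_count (N d r : ℕ) (hd : d % 2 = 1) (h5 : ¬ 5 ∣ d) (hr1 : 1 ≤ r) (hr10 : r < 10)
    (hr2 : r % 2 = 0) (hr5 : ¬ 5 ∣ r) :
    ∃ k, 1 ≤ k ∧ k < 10 * d ∧ Mcard r d N = (N + 10 * d - k) / (10 * d) := by
  obtain ⟨k, hk1, hklt, hchar⟩ := crt_char d r hd h5 hr1 hr10 hr2 hr5
  refine ⟨k, hk1, hklt, ?_⟩
  rw [Mcard, ← count_mod N (10 * d) k hk1 hklt]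
  congr 1
  apply Finset.filter_congr
  intro g _
  simp only [hchar g]

open Classical in
lemma Mcard_close (N d r : ℕ) (hd : d % 2 = 1) (hr1 : 1 ≤ r) (hr10 : r < 10)
    (hr2 : r % 2 = 0) (hr5 : ¬ 5 ∣ r) :
    Mcard r d N ≤ Mcard 2 d N + 1 ∧ Mcard 2 d N ≤ Mcard r d N + 1 := by
  by_cases h5 : 5 ∣ d
  · have hz : ∀ r', 1 ≤ r' → r' < 10 → ¬ 5 ∣ r' → Mcard r' d N = 0 := by
      intro r' h1 h10 h5'
      rw [Mcard, Finset.card_eq_zero, Finset.filter_eq_empty_iff]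
      rintro g - ⟨⟨-, h10'⟩, hdvd⟩
      have h5g : g % 5 = 0 := Nat.mod_eq_zero_of_dvd (h5.trans hdvd)
      omega
    rw [hz r hr1 hr10 hr5, hz 2 (by norm_num) (by norm_num) (by norm_num)]
    omega
  · obtain ⟨k1, hk11, hk1lt, he1⟩ := Mcard_count N d r hd h5 hr1 hr10 hr2 hr5
    obtain ⟨k2, hk21, hk2lt, he2⟩ := Mcard_count N d 2 hd h5 (by norm_num) (by norm_num)
      (by norm_num) (by norm_num)
    rw [he1, he2]
    constructor
    · rcases le_total (N + 10 * d - k1) (N + 10 * d - k2) with h | h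
      · exact (Nat.div_le_div_right h).trans (Nat.le_succ _)
      · exact div_close h (by omega)
    · rcases le_total (N + 10 * d - k2) (N + 10 * d - k1) with h | h
      · exact (Nat.div_le_div_right h).trans (Nat.le_succ _)
      · exact div_close h (by omega)

-- W ≥ 1
lemma W_ge_one (g : ℕ) : 1 ≤ W g := by
  rw [W]
  calc (1:ℝ) = ∏ _q ∈ g.primeFactors.filter (fun q => q ≠ 2), (1:ℝ) := by simp
    _ ≤ _ := ?_
  apply Finset.prod_le_prod (fun _ _ => zero_le_one)
  intro q hq
  rw [Finset.mem_filter] at hq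
  have hqp := Nat.prime_of_mem_primeFactors hq.1
  have h3 : 3 ≤ q := hqp.two_le.lt_of_ne (Ne.symm hq.2)
  have h3' : (3:ℝ) ≤ q := by exact_mod_cast h3
  rw [le_div_iff₀ (by linarith)]
  linarith

-- lower bound on Sig 2
lemma Sig2_lower (G : ℝ) : ((⌊G⌋₊ : ℝ) - 1) / 10 ≤ Sig 2 G := by
  classical
  set N := ⌊G⌋₊ with hN
  have h1 : (((Finset.Icc 1 N).filter (fun g => Even g ∧ g % 10 = 2)).card : ℝ) ≤ Sig 2 G := by
    rw [Sig]
    calc (((Finset.Icc 1 N).filter (fun g => Even g ∧ g % 10 = 2)).card : ℝ)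
        = ∑ _g ∈ (Finset.Icc 1 N).filter (fun g => Even g ∧ g % 10 = 2), (1:ℝ) := by
          rw [Finset.sum_const, nsmul_eq_mul, mul_one]
      _ ≤ _ := Finset.sum_le_sum (fun g _ => W_ge_one g)
  have h2 : ((Finset.Icc 1 N).filter (fun g => Even g ∧ g % 10 = 2)).card = (N + 8) / 10 := by
    have he : ∀ g ∈ Finset.Icc 1 N, ((Even g ∧ g % 10 = 2) ↔ g % 10 = 2) := by
      intro g _
      constructor
      · exact fun h => h.2
      · intro h
        refine ⟨?_, h⟩
        rw [Nat.even_iff]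
        have : g % 10 % 2 = g % 2 := Nat.mod_mod_of_dvd g (by norm_num)
        omega
    rw [Finset.filter_congr he, count_mod N 10 2 (by norm_num) (by norm_num)]
    omega
  refine le_trans ?_ h1
  rw [h2]
  have h3 : 10 * ((N + 8) / 10) ≥ N - 1 := by omega
  have h4 : ((N - 1 : ℕ) : ℝ) ≥ (N:ℝ) - 1 := by
    rcases Nat.eq_zero_or_pos N with h | h
    · simp [h]
    · push_cast [Nat.cast_sub h]; linarith
  have h5 : ((10 * ((N + 8) / 10) : ℕ) : ℝ) ≥ ((N - 1 : ℕ) : ℝ) := by exact_mod_cast h3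
  push_cast at h5
  linarith

-- difference bound
lemma Sig_diff (r : ℕ) (hr1 : 1 ≤ r) (hr10 : r < 10) (hr2 : r % 2 = 0) (hr5 : ¬ 5 ∣ r)
    (G : ℝ) : |Sig r G - Sig 2 G| ≤ 2 * Real.sqrt 3 * Real.sqrt ⌊G⌋₊ := by
  classical
  set N := ⌊G⌋₊ with hN
  rw [Sig_eq r G, Sig_eq 2 G, ← Finset.sum_sub_distrib]
  refine (Finset.abs_sum_le_sum_abs _ _).trans ?_
  have hub : ∀ d ∈ Finset.Icc 1 N,
      |(if Squarefree d ∧ d % 2 = 1 then hh d * (Mcard r d N) else 0) -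
       (if Squarefree d ∧ d % 2 = 1 then hh d * (Mcard 2 d N) else 0)|
      ≤ Real.sqrt 3 / Real.sqrt d := by
    intro d hd
    by_cases hP : Squarefree d ∧ d % 2 = 1
    · rw [if_pos hP, if_pos hP, ← mul_sub, abs_mul, abs_of_nonneg (hh_nonneg hP.2)]
      have h2 : |((Mcard r d N : ℝ)) - (Mcard 2 d N : ℝ)| ≤ 1 := by
        obtain ⟨ha, hb⟩ := Mcard_close N d r hP.2 hr1 hr10 hr2 hr5
        rw [abs_le]
        have ha' : (Mcard r d N : ℝ) ≤ (Mcard 2 d N : ℝ) + 1 := by exact_mod_cast ha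
        have hb' : (Mcard 2 d N : ℝ) ≤ (Mcard r d N : ℝ) + 1 := by exact_mod_cast hb
        constructor <;> linarith
      calc hh d * |(Mcard r d N : ℝ) - (Mcard 2 d N : ℝ)| ≤ hh d * 1 :=
            mul_le_mul_of_nonneg_left h2 (hh_nonneg hP.2)
        _ = hh d := mul_one _
        _ ≤ Real.sqrt 3 / Real.sqrt d := hh_le hP.1 hP.2
    · rw [if_neg hP, if_neg hP, sub_zero, abs_zero]
      positivity
  refine (Finset.sum_le_sum hub).trans ?_
  have heq : ∑ d ∈ Finset.Icc 1 N, Real.sqrt 3 / Real.sqrt d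
      = Real.sqrt 3 * ∑ d ∈ Finset.Icc 1 N, 1 / Real.sqrt d := by
    rw [Finset.mul_sum]
    apply Finset.sum_congr rfl
    intro d _
    rw [mul_one_div]
  rw [heq]
  calc Real.sqrt 3 * ∑ d ∈ Finset.Icc 1 N, 1 / Real.sqrt d
      ≤ Real.sqrt 3 * (2 * Real.sqrt N) :=
        mul_le_mul_of_nonneg_left (sum_one_div_sqrt N) (Real.sqrt_nonneg 3)
    _ = 2 * Real.sqrt 3 * Real.sqrt N := by ring

/-- As `G → ∞`, for each residue `r ∈ {4, 6, 8}`, the ratio `Σ_r(G)/Σ_2(G)` tends to `1`. -/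
theorem team_ratio_tendsto_one_mod_ten (r : ℕ) (hr : r ∈ ({4, 6, 8} : Finset ℕ)) :
    Tendsto (fun G : ℝ => Sig r G / Sig 2 G) atTop (nhds 1) := by
  have hr' : r = 4 ∨ r = 6 ∨ r = 8 := by simpa using hr
  have hr1 : 1 ≤ r := by omega
  have hr10 : r < 10 := by omega
  have hr2 : r % 2 = 0 := by omega
  have hr5 : ¬ 5 ∣ r := by omega
  have hsq3 : (1:ℝ) ≤ Real.sqrt 3 := by
    rw [show (1:ℝ) = Real.sqrt 1 by simp]
    exact Real.sqrt_le_sqrt (by norm_num)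
  -- sqrt tends to atTop
  have hsqrt_top : Tendsto Real.sqrt atTop atTop := by
    apply tendsto_atTop_atTop.2
    intro b
    refine ⟨b^2, fun a ha => ?_⟩
    have h1 : |b| ≤ Real.sqrt a := by
      rw [← Real.sqrt_sq_eq_abs]
      exact Real.sqrt_le_sqrt ha
    exact (le_abs_self b).trans h1
  have hbound : Tendsto (fun G : ℝ => 40 * Real.sqrt 3 / Real.sqrt G) atTop (nhds 0) :=
    Tendsto.div_atTop tendsto_const_nhds hsqrt_top
  have key : Tendsto (fun G : ℝ => Sig r G / Sig 2 G - 1) atTop (nhds 0) := by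
    rw [tendsto_zero_iff_abs_tendsto_zero]
    apply squeeze_zero' (Eventually.of_forall (fun G => abs_nonneg _))
      _ hbound
    filter_upwards [eventually_ge_atTop (22:ℝ)] with G hG
    have hG0 : (0:ℝ) ≤ G := by linarith
    have hNle : ((⌊G⌋₊:ℕ):ℝ) ≤ G := Nat.floor_le hG0
    have hNge : G - 1 ≤ ((⌊G⌋₊:ℕ):ℝ) := by
      have := Nat.lt_floor_add_one G
      linarith
    have hS2 : (G - 11) / 10 ≤ Sig 2 G := by
      have := Sig2_lower G
      have h' : (G - 11)/10 ≤ (((⌊G⌋₊:ℕ):ℝ) - 1)/10 := by linarith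
      linarith
    have hS2pos : 0 < Sig 2 G := lt_of_lt_of_le (by linarith) hS2
    have hdiff : |Sig r G - Sig 2 G| ≤ 2 * Real.sqrt 3 * Real.sqrt G := by
      refine (Sig_diff r hr1 hr10 hr2 hr5 G).trans ?_
      have : Real.sqrt (⌊G⌋₊:ℕ) ≤ Real.sqrt G := Real.sqrt_le_sqrt hNle
      nlinarith [Real.sqrt_nonneg (⌊G⌋₊:ℕ)]
    have hrw : Sig r G / Sig 2 G - 1 = (Sig r G - Sig 2 G) / Sig 2 G := by
      field_simp
    rw [hrw, abs_div, abs_of_pos hS2pos]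
    have hsG : 0 < Real.sqrt G := Real.sqrt_pos.2 (by linarith)
    have hGsq : Real.sqrt G * Real.sqrt G = G := Real.mul_self_sqrt hG0
    have step1 : |Sig r G - Sig 2 G| / Sig 2 G ≤ (2 * Real.sqrt 3 * Real.sqrt G) / ((G - 11)/10) :=
      div_le_div₀ (by positivity) hdiff (by linarith) hS2
    refine step1.trans ?_
    rw [div_le_div_iff₀ (by linarith) hsG]
    nlinarith [Real.sqrt_nonneg 3, hsq3]
  have := key.add (tendsto_const_nhds (x := (1:ℝ)))
  simpa using this
end

section
/- As G tends to infinity, the ratio T_4(G) / T_2(G) tends to 1; that is, in base 3 (equivalently base 6) the asymptotic relative population of the residue class r = 1 mod 3 equals that of r = 2 mod 3. -/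
open Filter

/-- The sum of `W(g)` over even integers `g` with `0 < g ≤ G` and `g ≡ r (mod 6)`. -/
noncomputable def T (r : ℕ) (G : ℝ) : ℝ :=
  ∑ g ∈ (Finset.Icc 1 ⌊G⌋₊).filter (fun g => Even g ∧ g % 6 = r), W g

namespace BaseSixAux

noncomputable def chi (n : ℕ) : ℝ := if n % 3 = 2 then 1 else if n % 3 = 1 then -1 else 0

noncomputable def hw (d : ℕ) : ℝ := ∏ q ∈ d.primeFactors, (1 / ((q : ℝ) - 2))

noncomputable def t (r N : ℕ) : ℝ :=
  ∑ g ∈ (Finset.Icc 1 N).filter (fun g => Even g ∧ g % 6 = r), W g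

lemma chi_congr {n m : ℕ} (h : n % 3 = m % 3) : chi n = chi m := by
  simp only [chi, h]

lemma abs_chi_le (n : ℕ) : |chi n| ≤ 1 := by
  unfold chi; split_ifs <;> simp

lemma three_le_of_mem {g q : ℕ} (hq : q ∈ g.primeFactors.filter (fun q => q ≠ 2)) :
    3 ≤ q := by
  simp only [Finset.mem_filter, Nat.mem_primeFactors] at hq
  have := hq.1.1.two_le
  omega

lemma one_le_W (g : ℕ) : 1 ≤ W g := by
  unfold W
  set S := g.primeFactors.filter (fun q => q ≠ 2) with hS
  have h : (∏ _q ∈ S, (1:ℝ)) ≤ ∏ q ∈ S, ((q:ℝ)-1)/((q:ℝ)-2) := by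
    apply Finset.prod_le_prod (fun _ _ => zero_le_one)
    intro q hq
    have h3 : 3 ≤ q := three_le_of_mem hq
    have h3' : (3:ℝ) ≤ (q:ℝ) := by exact_mod_cast h3
    rw [le_div_iff₀ (by linarith)]
    linarith
  simpa using h

lemma W_pos (g : ℕ) : 0 < W g := lt_of_lt_of_le one_pos (one_le_W g)

lemma hw_nonneg (d : ℕ) : 0 ≤ hw d := by
  unfold hw
  apply Finset.prod_nonneg
  intro q hq
  rcases Nat.mem_primeFactors.mp hq with ⟨hp, _, _⟩
  rcases eq_or_ne q 2 with rfl | h2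
  · norm_num
  · have h3 : 3 ≤ q := by have := hp.two_le; omega
    have hq3 : (3:ℝ) ≤ (q:ℝ) := by exact_mod_cast h3
    have : (0:ℝ) < (q:ℝ) - 2 := by linarith
    positivity

lemma t_nonneg (r N : ℕ) : 0 ≤ t r N :=
  Finset.sum_nonneg fun g _ => (W_pos g).le

end BaseSixAux

namespace BaseSixAux

lemma squarefree_prod_primes {A : Finset ℕ} (h : ∀ p ∈ A, p.Prime) :
    Squarefree (∏ p ∈ A, p) := by
  classical
  induction A using Finset.induction with
  | empty => simpa using squarefree_one
  | @insert p A hpA ih =>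
    rw [Finset.prod_insert hpA]
    have hp : p.Prime := h p (Finset.mem_insert_self p A)
    have hA : ∀ q ∈ A, q.Prime := fun q hq => h q (Finset.mem_insert_of_mem hq)
    rw [Nat.squarefree_mul_iff]
    refine ⟨?_, hp.squarefree, ih hA⟩
    rw [Nat.Prime.coprime_iff_not_dvd hp]
    intro hdvd
    obtain ⟨q, hqA, hpq⟩ := (Nat.Prime.prime hp).exists_mem_finset_dvd hdvd
    have := (Nat.prime_dvd_prime_iff_eq hp (hA q hqA)).mp hpq
    exact hpA (this ▸ hqA)

lemma W_eq_sum {g : ℕ} (hg : g ≠ 0) :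
    W g = ∑ d ∈ g.divisors.filter (fun d => Squarefree d ∧ ¬ 2 ∣ d), hw d := by
  classical
  set S := g.primeFactors.filter (fun q => q ≠ 2) with hS
  have hSprime : ∀ q ∈ S, Nat.Prime q := by
    intro q hq
    exact (Nat.mem_primeFactors.mp (Finset.mem_filter.mp hq).1).1
  have hWexp : W g = ∑ A ∈ S.powerset, ∏ q ∈ A, (1/((q:ℝ)-2)) := by
    have hfact : ∀ q ∈ S, ((q:ℝ)-1)/((q:ℝ)-2) = 1/((q:ℝ)-2) + 1 := by
      intro q hq
      have h3 : 3 ≤ q := three_le_of_mem hq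
      have h3' : (3:ℝ) ≤ (q:ℝ) := by exact_mod_cast h3
      have hne : (q:ℝ) - 2 ≠ 0 := by linarith
      field_simp
      ring
    rw [W, ← hS, Finset.prod_congr rfl hfact, Finset.prod_add]
    refine Finset.sum_congr rfl fun A hA => ?_
    rw [Finset.prod_const_one, mul_one]
  rw [hWexp]
  apply Finset.sum_nbij' (i := fun A => ∏ q ∈ A, q) (j := fun d => d.primeFactors)
  · intro A hA
    rw [Finset.mem_powerset] at hA
    have hAprime : ∀ q ∈ A, Nat.Prime q := fun q hq => hSprime q (hA hq)
    rw [Finset.mem_filter, Nat.mem_divisors]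
    refine ⟨⟨?_, hg⟩, squarefree_prod_primes hAprime, ?_⟩
    · calc (∏ q ∈ A, q) ∣ ∏ q ∈ g.primeFactors, q :=
          Finset.prod_dvd_prod_of_subset _ _ _ (hA.trans (Finset.filter_subset _ _))
        _ ∣ g := Nat.prod_primeFactors_dvd g
    · intro h2
      obtain ⟨q, hqA, h2q⟩ := (Nat.prime_iff.mp Nat.prime_two).exists_mem_finset_dvd h2
      have : q = 2 := ((Nat.prime_dvd_prime_iff_eq Nat.prime_two (hAprime q hqA)).mp h2q).symm
      exact (Finset.mem_filter.mp (hA hqA)).2 this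
  · intro d hd
    rw [Finset.mem_filter, Nat.mem_divisors] at hd
    obtain ⟨⟨hdvd, -⟩, hsq, h2⟩ := hd
    rw [Finset.mem_powerset]
    intro q hq
    rw [Nat.mem_primeFactors] at hq
    obtain ⟨hq1, hq2, hq3⟩ := hq
    rw [hS, Finset.mem_filter, Nat.mem_primeFactors]
    refine ⟨⟨hq1, hq2.trans hdvd, hg⟩, ?_⟩
    rintro rfl
    exact h2 hq2
  · intro A hA
    rw [Finset.mem_powerset] at hA
    exact Nat.primeFactors_prod (fun q hq => hSprime q (hA hq))
  · intro d hd
    rw [Finset.mem_filter] at hd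
    exact Nat.prod_primeFactors_of_squarefree hd.2.1
  · intro A hA
    rw [Finset.mem_powerset] at hA
    rw [hw, Nat.primeFactors_prod (fun q hq => hSprime q (hA hq))]

end BaseSixAux

namespace BaseSixAux

lemma triple_zero (f : ℕ → ℝ) (hper : ∀ j, f (j+3) = f j)
    (h0 : f 1 + f 2 + f 3 = 0) : ∀ k, f (k+1) + f (k+2) + f (k+3) = 0 := by
  intro k
  induction k with
  | zero => simpa using h0
  | succ n ih =>
    have h4 : f (n+1+3) = f (n+1) := hper (n+1)
    have e1 : n+1+1 = n+2 := by ring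
    have e2 : n+1+2 = n+3 := by ring
    have e3 : n+1+3 = n+4 := by ring
    rw [e1, e2, e3]
    rw [e3] at h4
    linarith

lemma sum_period (f : ℕ → ℝ) (hper : ∀ j, f (j+3) = f j)
    (h0 : f 1 + f 2 + f 3 = 0) :
    ∀ M, ∑ j ∈ Finset.Icc 1 M, f j = ∑ j ∈ Finset.Icc 1 (M % 3), f j := by
  intro M
  induction M using Nat.strong_induction_on with
  | _ M ih =>
    by_cases hM : M < 3
    · rw [Nat.mod_eq_of_lt hM]
    · push_neg at hM
      obtain ⟨m, rfl⟩ : ∃ m, M = m + 3 := ⟨M - 3, by omega⟩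
      have hsplit : ∑ j ∈ Finset.Icc 1 (m+3), f j
          = ∑ j ∈ Finset.Icc 1 m, f j + (f (m+1) + f (m+2) + f (m+3)) := by
        rw [Finset.sum_Icc_succ_top (by omega), Finset.sum_Icc_succ_top (by omega),
          Finset.sum_Icc_succ_top (by omega)]
        ring
      rw [hsplit, triple_zero f hper h0 m, add_zero, ih m (by omega)]
      have : (m+3) % 3 = m % 3 := by omega
      rw [this]

lemma abs_chi_sum (c M : ℕ) : |∑ j ∈ Finset.Icc 1 M, chi (c*j)| ≤ 1 := by
  by_cases h3 : c % 3 = 0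
  · have : ∀ j ∈ Finset.Icc 1 M, chi (c*j) = 0 := by
      intro j _
      have : (c*j) % 3 = 0 := by
        rw [Nat.mul_mod, h3, zero_mul, Nat.zero_mod]
      simp [chi, this]
    rw [Finset.sum_congr rfl this]
    simp
  · have hper : ∀ j, chi (c*(j+3)) = chi (c*j) := by
      intro j
      apply chi_congr
      rw [Nat.mul_add, Nat.add_mul_mod_self_right]
    have hc : c % 3 = 1 ∨ c % 3 = 2 := by omega
    have h30 : chi (c*3) = 0 := by
      have : (c*3) % 3 = 0 := Nat.mul_mod_left .. ▸ by
        rw [Nat.mul_mod, Nat.mod_self, mul_zero, Nat.zero_mod]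
      simp [chi, this]
    have h0 : chi (c*1) + chi (c*2) + chi (c*3) = 0 := by
      rcases hc with h | h
      · have e1 : (c*1) % 3 = 1 := by rw [Nat.mul_mod, h]
        have e2 : (c*2) % 3 = 2 := by rw [Nat.mul_mod, h]
        rw [h30]; simp [chi, e1, e2, h]
      · have e1 : (c*1) % 3 = 2 := by rw [Nat.mul_mod, h]
        have e2 : (c*2) % 3 = 1 := by rw [Nat.mul_mod, h]
        rw [h30]; simp [chi, e1, e2, h]
    rw [sum_period (fun j => chi (c*j)) hper h0 M]
    have hlt : M % 3 < 3 := Nat.mod_lt _ (by omega)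
    interval_cases h : M % 3
    · simp
    · simp only [Finset.Icc_self, Finset.sum_singleton]
      exact abs_chi_le _
    · have : Finset.Icc 1 2 = {1, 2} := by decide
      rw [this, Finset.sum_insert (by decide), Finset.sum_singleton]
      have : chi (c*1) + chi (c*2) = 0 := by rw [h30] at h0; linarith
      rw [this]
      simp

end BaseSixAux

namespace BaseSixAux

lemma nat_bound {d : ℕ} (hsq : Squarefree d) (h2 : ¬ 2 ∣ d) :
    d ≤ 3 * (∏ q ∈ d.primeFactors, (q-2))^2 := by
  classical
  set P := d.primeFactors with hP
  have hprime : ∀ q ∈ P, Nat.Prime q := fun q hq => (Nat.mem_primeFactors.mp hq).1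
  have h3le : ∀ q ∈ P, 3 ≤ q := by
    intro q hq
    have hp := hprime q hq
    have hq2 : q ≠ 2 := by
      rintro rfl
      exact h2 (Nat.mem_primeFactors.mp hq).2.1
    have := hp.two_le
    omega
  have hd : d = ∏ q ∈ P, q := (Nat.prod_primeFactors_of_squarefree hsq).symm
  have hsplit : (∏ q ∈ P.filter (fun q => q ≠ 3), q) * (∏ q ∈ P.filter (fun q => ¬ q ≠ 3), q) = ∏ q ∈ P, q :=
    Finset.prod_filter_mul_prod_filter_not P _ _
  have hA : (∏ q ∈ P.filter (fun q => ¬ q ≠ 3), q) ≤ 3 := by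
    have hsub : P.filter (fun q => ¬ q ≠ 3) ⊆ ({3} : Finset ℕ) := by
      intro q hq
      simp only [Finset.mem_filter, not_not] at hq
      simp [hq.2]
    calc (∏ q ∈ P.filter (fun q => ¬ q ≠ 3), q) ≤ ∏ q ∈ ({3} : Finset ℕ), q := by
          apply Finset.prod_le_prod_of_subset_of_one_le' hsub
          intro i hi _
          simp only [Finset.mem_singleton] at hi
          omega
      _ = 3 := by simp
  have hB : (∏ q ∈ P.filter (fun q => q ≠ 3), q) ≤ ∏ q ∈ P.filter (fun q => q ≠ 3), (q-2)^2 := by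
    apply Finset.prod_le_prod'
    intro q hq
    rw [Finset.mem_filter] at hq
    have h5 : 5 ≤ q := by
      have := h3le q hq.1
      have hp := hprime q hq.1
      have hq2 : q ≠ 4 := by
        rintro rfl
        norm_num at hp
      omega
    obtain ⟨k, rfl⟩ : ∃ k, q = k + 5 := ⟨q - 5, by omega⟩
    have : k + 5 - 2 = k + 3 := by omega
    rw [this]
    nlinarith
  have hC : (∏ q ∈ P.filter (fun q => q ≠ 3), (q-2)^2) ≤ ∏ q ∈ P, (q-2)^2 := by
    apply Finset.prod_le_prod_of_subset_of_one_le' (Finset.filter_subset _ _)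
    intro q hq _
    have := h3le q hq
    have h1 : 1 ≤ q - 2 := by omega
    exact Nat.one_le_pow _ _ (by omega)
  calc d = (∏ q ∈ P.filter (fun q => q ≠ 3), q) * (∏ q ∈ P.filter (fun q => ¬ q ≠ 3), q) := by
        rw [hsplit, ← hd]
    _ ≤ (∏ q ∈ P, (q-2)^2) * 3 := Nat.mul_le_mul (hB.trans hC) hA
    _ = 3 * (∏ q ∈ P, (q-2))^2 := by rw [← Finset.prod_pow]; ring

lemma hw_le {d : ℕ} (hd : d ≠ 0) (hsq : Squarefree d) (h2 : ¬ 2 ∣ d) :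
    hw d ≤ Real.sqrt 3 / Real.sqrt d := by
  classical
  set P := d.primeFactors with hP
  have hprime : ∀ q ∈ P, Nat.Prime q := fun q hq => (Nat.mem_primeFactors.mp hq).1
  have h3le : ∀ q ∈ P, 3 ≤ q := by
    intro q hq
    have hp := hprime q hq
    have hq2 : q ≠ 2 := by
      rintro rfl
      exact h2 (Nat.mem_primeFactors.mp hq).2.1
    have := hp.two_le
    omega
  set X : ℕ := ∏ q ∈ P, (q-2) with hX
  have hXpos : 0 < X := by
    apply Finset.prod_pos
    intro q hq
    have := h3le q hq
    omega
  have hwX : hw d = 1 / (X:ℝ) := by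
    rw [hw, ← hP]
    rw [show (X:ℝ) = ∏ q ∈ P, ((q:ℝ) - 2) by
      rw [hX]
      push_cast
      apply Finset.prod_congr rfl
      intro q hq
      have := h3le q hq
      rw [Nat.cast_sub (by omega)]
      norm_num]
    simp only [one_div]
    rw [← Finset.prod_inv_distrib]
  rw [hwX]
  have hnb : (d:ℝ) ≤ 3 * (X:ℝ)^2 := by
    exact_mod_cast nat_bound hsq h2
  have hXR : (0:ℝ) < (X:ℝ) := by exact_mod_cast hXpos
  have hd1 : (0:ℝ) < (d:ℝ) := by
    have : 1 ≤ d := Nat.one_le_iff_ne_zero.mpr hd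
    exact_mod_cast Nat.lt_of_lt_of_le Nat.zero_lt_one this
  have hdR : (0:ℝ) < Real.sqrt d := Real.sqrt_pos.mpr hd1
  have hsd : Real.sqrt d ≤ Real.sqrt 3 * (X:ℝ) := by
    calc Real.sqrt d ≤ Real.sqrt (3 * (X:ℝ)^2) := Real.sqrt_le_sqrt hnb
      _ = Real.sqrt 3 * (X:ℝ) := by
          rw [Real.sqrt_mul (by norm_num), Real.sqrt_sq (by positivity)]
  rw [div_le_div_iff₀ hXR hdR]
  linarith

end BaseSixAux

namespace BaseSixAux

lemma sum_sqrt_le (N : ℕ) :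
    ∑ d ∈ Finset.Icc 1 N, (1 / Real.sqrt d) ≤ 2 * Real.sqrt N := by
  induction N with
  | zero => simp
  | succ n ih =>
    rw [Finset.sum_Icc_succ_top (by omega)]
    have hb : (0:ℝ) < Real.sqrt ((n:ℝ)+1) := by positivity
    have ha : (0:ℝ) ≤ Real.sqrt n := Real.sqrt_nonneg _
    have ha2 : (Real.sqrt n)^2 = n := Real.sq_sqrt (by positivity)
    have hb2 : (Real.sqrt ((n:ℝ)+1))^2 = (n:ℝ)+1 := Real.sq_sqrt (by positivity)
    have key : 1 / Real.sqrt ((n:ℝ)+1) ≤ 2*Real.sqrt ((n:ℝ)+1) - 2*Real.sqrt n := by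
      rw [div_le_iff₀ hb]
      nlinarith [sq_nonneg (Real.sqrt n - Real.sqrt ((n:ℝ)+1))]
    have hcast : ((n+1 : ℕ):ℝ) = (n:ℝ)+1 := by push_cast; ring
    rw [hcast]
    linarith

end BaseSixAux

namespace BaseSixAux

lemma step1 (N : ℕ) :
    t 2 N - t 4 N = ∑ g ∈ (Finset.Icc 1 N).filter (fun g => Even g), chi g * W g := by
  have h2 : t 2 N = ∑ g ∈ (Finset.Icc 1 N).filter (fun g => Even g),
      (if g % 6 = 2 then W g else 0) := by
    rw [t, ← Finset.sum_filter, Finset.filter_filter]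
  have h4 : t 4 N = ∑ g ∈ (Finset.Icc 1 N).filter (fun g => Even g),
      (if g % 6 = 4 then W g else 0) := by
    rw [t, ← Finset.sum_filter, Finset.filter_filter]
  rw [h2, h4, ← Finset.sum_sub_distrib]
  apply Finset.sum_congr rfl
  intro g hg
  rw [Finset.mem_filter] at hg
  have he : g % 2 = 0 := Nat.even_iff.mp hg.2
  have h60 : g % 6 = 0 ∨ g % 6 = 2 ∨ g % 6 = 4 := by omega
  rcases h60 with h | h | h
  · have h3 : g % 3 = 0 := by omega
    simp [chi, h, h3]
  · have h3 : g % 3 = 2 := by omega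
    simp [chi, h, h3]
  · have h3 : g % 3 = 1 := by omega
    simp [chi, h, h3]

lemma inner_reindex {d N : ℕ} (hd1 : 1 ≤ d) (h2 : ¬ 2 ∣ d) :
    ∑ g ∈ (Finset.Icc 1 N).filter (fun g => Even g ∧ d ∣ g), chi g
      = ∑ j ∈ Finset.Icc 1 (N / (2*d)), chi (2*d*j) := by
  have h2d : 0 < 2*d := by omega
  have hcop : Nat.Coprime 2 d := Nat.coprime_two_left.mpr (Nat.odd_iff.mpr (by omega))
  apply Finset.sum_nbij' (i := fun g => g / (2*d)) (j := fun j => 2*d*j)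
  · intro g hg
    rw [Finset.mem_filter, Finset.mem_Icc] at hg
    obtain ⟨⟨hg1, hgN⟩, hgE, hgd⟩ := hg
    have hdvd : 2*d ∣ g := Nat.Coprime.mul_dvd_of_dvd_of_dvd hcop hgE.two_dvd hgd
    rw [Finset.mem_Icc]
    constructor
    · exact Nat.one_le_div_iff h2d |>.mpr (Nat.le_of_dvd (by omega) hdvd)
    · exact Nat.div_le_div_right hgN
  · intro j hj
    rw [Finset.mem_Icc] at hj
    rw [Finset.mem_filter, Finset.mem_Icc]
    refine ⟨⟨by nlinarith [hj.1], ?_⟩, ⟨d*j, by ring⟩, ⟨2*j, by ring⟩⟩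
    calc 2*d*j ≤ 2*d*(N/(2*d)) := Nat.mul_le_mul_left _ hj.2
      _ ≤ N := Nat.mul_div_le N (2*d)
  · intro g hg
    rw [Finset.mem_filter, Finset.mem_Icc] at hg
    obtain ⟨⟨hg1, hgN⟩, hgE, hgd⟩ := hg
    have hdvd : 2*d ∣ g := Nat.Coprime.mul_dvd_of_dvd_of_dvd hcop hgE.two_dvd hgd
    exact Nat.mul_div_cancel' hdvd
  · intro j _
    rw [Nat.mul_div_cancel_left _ h2d]
  · intro g hg
    rw [Finset.mem_filter, Finset.mem_Icc] at hg
    obtain ⟨⟨hg1, hgN⟩, hgE, hgd⟩ := hg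
    have hdvd : 2*d ∣ g := Nat.Coprime.mul_dvd_of_dvd_of_dvd hcop hgE.two_dvd hgd
    rw [Nat.mul_div_cancel' hdvd]

end BaseSixAux

namespace BaseSixAux

lemma D_bound (N : ℕ) : |t 2 N - t 4 N| ≤ Real.sqrt 3 * (2 * Real.sqrt N) := by
  classical
  rw [step1]
  have hstep2 : ∑ g ∈ (Finset.Icc 1 N).filter (fun g => Even g), chi g * W g
      = ∑ g ∈ (Finset.Icc 1 N).filter (fun g => Even g),
          ∑ d ∈ g.divisors.filter (fun d => Squarefree d ∧ ¬ 2 ∣ d), chi g * hw d := by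
    apply Finset.sum_congr rfl
    intro g hg
    rw [Finset.mem_filter, Finset.mem_Icc] at hg
    rw [W_eq_sum (show g ≠ 0 by omega), Finset.mul_sum]
  rw [hstep2]
  rw [Finset.sum_comm' (s' := fun d => (Finset.Icc 1 N).filter (fun g => Even g ∧ d ∣ g))
      (t' := (Finset.Icc 1 N).filter (fun d => Squarefree d ∧ ¬ 2 ∣ d))
      (by
        intro g d
        simp only [Finset.mem_filter, Finset.mem_Icc, Nat.mem_divisors]
        constructor
        · rintro ⟨⟨⟨hg1, hgN⟩, hE⟩, ⟨hdvd, hg0⟩, hP⟩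
          have hd0 : d ≠ 0 := by
            rintro rfl
            exact hg0 (Nat.eq_zero_of_zero_dvd hdvd)
          exact ⟨⟨⟨hg1, hgN⟩, hE, hdvd⟩, ⟨⟨Nat.one_le_iff_ne_zero.mpr hd0,
            (Nat.le_of_dvd (by omega) hdvd).trans hgN⟩, hP⟩⟩
        · rintro ⟨⟨⟨hg1, hgN⟩, hE, hdvd⟩, ⟨⟨hd1, hdN⟩, hP⟩⟩
          exact ⟨⟨⟨hg1, hgN⟩, hE⟩, ⟨hdvd, by omega⟩, hP⟩)]
  set F := (Finset.Icc 1 N).filter (fun d => Squarefree d ∧ ¬ 2 ∣ d) with hF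
  calc |∑ d ∈ F, ∑ g ∈ (Finset.Icc 1 N).filter (fun g => Even g ∧ d ∣ g), chi g * hw d|
      ≤ ∑ d ∈ F, |∑ g ∈ (Finset.Icc 1 N).filter (fun g => Even g ∧ d ∣ g), chi g * hw d| :=
        Finset.abs_sum_le_sum_abs _ _
    _ ≤ ∑ d ∈ F, hw d := by
        apply Finset.sum_le_sum
        intro d hd
        rw [hF, Finset.mem_filter, Finset.mem_Icc] at hd
        rw [← Finset.sum_mul, abs_mul, abs_of_nonneg (hw_nonneg d)]
        calc |∑ g ∈ (Finset.Icc 1 N).filter (fun g => Even g ∧ d ∣ g), chi g| * hw d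
            ≤ 1 * hw d := by
              apply mul_le_mul_of_nonneg_right _ (hw_nonneg d)
              rw [inner_reindex hd.1.1 hd.2.2]
              exact abs_chi_sum (2*d) (N/(2*d))
          _ = hw d := one_mul _
    _ ≤ ∑ d ∈ F, Real.sqrt 3 / Real.sqrt d := by
        apply Finset.sum_le_sum
        intro d hd
        rw [hF, Finset.mem_filter, Finset.mem_Icc] at hd
        exact hw_le (by omega) hd.2.1 hd.2.2
    _ ≤ ∑ d ∈ Finset.Icc 1 N, Real.sqrt 3 / Real.sqrt d := by
        apply Finset.sum_le_sum_of_subset_of_nonneg (Finset.filter_subset _ _)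
        intro d _ _
        positivity
    _ = Real.sqrt 3 * ∑ d ∈ Finset.Icc 1 N, (1 / Real.sqrt d) := by
        rw [Finset.mul_sum]
        apply Finset.sum_congr rfl
        intro d _
        rw [div_eq_mul_one_div]
    _ ≤ Real.sqrt 3 * (2 * Real.sqrt N) :=
        mul_le_mul_of_nonneg_left (sum_sqrt_le N) (Real.sqrt_nonneg 3)

end BaseSixAux

namespace BaseSixAux

lemma t2_lb (N : ℕ) : ((N:ℝ) - 1)/6 ≤ t 2 N := by
  classical
  set s := (Finset.Icc 1 N).filter (fun g => Even g ∧ g % 6 = 2) with hs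
  have hcard : (N+4)/6 ≤ s.card := by
    have := Finset.card_le_card_of_injOn (f := fun t => 6*t+2)
      (s := Finset.range ((N+4)/6)) (t := s) ?_ ?_
    · simpa using this
    · intro a ha
      rw [Finset.mem_coe, Finset.mem_range] at ha
      rw [Finset.mem_coe, hs, Finset.mem_filter, Finset.mem_Icc]
      dsimp only
      refine ⟨⟨by omega, by omega⟩, ?_, by omega⟩
      rw [Nat.even_iff]
      omega
    · intro a _ b _ hab
      dsimp only at hab
      omega
  have h1 : (s.card : ℝ) ≤ t 2 N := by
    have h := Finset.card_nsmul_le_sum s W 1 (fun g _ => one_le_W g)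
    rw [nsmul_eq_mul, mul_one] at h
    exact h
  have h2 : ((N:ℝ) - 1)/6 ≤ (((N+4)/6 : ℕ) : ℝ) := by
    have hN : N ≤ 6 * ((N+4)/6) + 1 := by omega
    have : (N:ℝ) ≤ 6 * (((N+4)/6 : ℕ):ℝ) + 1 := by exact_mod_cast hN
    linarith
  have h3 : (((N+4)/6 : ℕ) : ℝ) ≤ (s.card : ℝ) := by exact_mod_cast hcard
  linarith

lemma sqrt_nat_atTop : Tendsto (fun N : ℕ => Real.sqrt N) atTop atTop := by
  rw [tendsto_atTop_atTop]
  intro b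
  refine ⟨(⌈b⌉₊)^2, fun n hn => ?_⟩
  have hcast : ((⌈b⌉₊:ℝ))^2 ≤ (n:ℝ) := by exact_mod_cast hn
  calc b ≤ (⌈b⌉₊ : ℝ) := Nat.le_ceil b
    _ = Real.sqrt (((⌈b⌉₊:ℝ))^2) := (Real.sqrt_sq (by positivity)).symm
    _ ≤ Real.sqrt n := Real.sqrt_le_sqrt hcast

lemma key_bound {N : ℕ} (hN : 2 ≤ N) :
    |t 4 N / t 2 N - 1| ≤ 24 * Real.sqrt 3 / Real.sqrt N := by
  have hNpos : (0:ℝ) < (N:ℝ) := by exact_mod_cast Nat.lt_of_lt_of_le Nat.zero_lt_two hN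
  have h2 : (N:ℝ)/12 ≤ t 2 N := by
    have := t2_lb N
    have hNR : (2:ℝ) ≤ (N:ℝ) := by exact_mod_cast hN
    linarith
  have ht2pos : 0 < t 2 N := lt_of_lt_of_le (by positivity) h2
  have h1 : |t 2 N - t 4 N| ≤ Real.sqrt 3 * (2 * Real.sqrt N) := D_bound N
  have heq : t 4 N / t 2 N - 1 = (t 4 N - t 2 N) / t 2 N := by
    field_simp
  rw [heq, abs_div, abs_of_pos ht2pos, abs_sub_comm]
  calc |t 2 N - t 4 N| / t 2 N ≤ (Real.sqrt 3 * (2 * Real.sqrt N)) / ((N:ℝ)/12) :=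
        div_le_div₀ (by positivity) h1 (by positivity) h2
    _ = 24 * Real.sqrt 3 / Real.sqrt N := by
        have hsN : (0:ℝ) < Real.sqrt N := Real.sqrt_pos.mpr hNpos
        field_simp
        nlinarith [Real.mul_self_sqrt hNpos.le, Real.sqrt_nonneg 3, Real.sqrt_nonneg (N:ℝ)]

lemma tendsto_nat : Tendsto (fun N : ℕ => t 4 N / t 2 N) atTop (nhds 1) := by
  have hb : Tendsto (fun N : ℕ => 24 * Real.sqrt 3 / Real.sqrt N) atTop (nhds 0) :=
    Tendsto.div_atTop tendsto_const_nhds sqrt_nat_atTop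
  have h0 : Tendsto (fun N : ℕ => t 4 N / t 2 N - 1) atTop (nhds 0) := by
    apply squeeze_zero_norm' _ hb
    filter_upwards [eventually_ge_atTop 2] with N hN
    exact key_bound hN
  have := h0.add (tendsto_const_nhds (x := (1:ℝ)))
  simpa using this

end BaseSixAux

/-- In base 3 (equivalently base 6), as `G → ∞`, the ratio `T_4(G)/T_2(G)` tends to `1`. -/
theorem base_six_team_four_ratio_tendsto_one :
    Tendsto (fun G : ℝ => T 4 G / T 2 G) atTop (nhds 1) := by
  have : (fun G : ℝ => T 4 G / T 2 G)
      = (fun N : ℕ => BaseSixAux.t 4 N / BaseSixAux.t 2 N) ∘ (fun G : ℝ => ⌊G⌋₊) := rfl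
  rw [this]
  exact BaseSixAux.tendsto_nat.comp tendsto_nat_floor_atTop
end

section
/- As G tends to infinity, the ratio T_0(G) / T_2(G) tends to 2; that is, in base 3 (equivalently base 6) the asymptotic relative population of the residue class r = 0 mod 3, which contains all multiples of 6, is twice that of r = 2 mod 3, matching the two ordered pairs (1,1), (2,2) of last digits base 3 assigned to r = 0 versus one pair for each other class. -/
open Filter

open Finset

namespace B6


noncomputable def a (d : ℕ) : ℝ := ∏ q ∈ d.primeFactors, (1 / ((q : ℝ) - 2))

def Q (d : ℕ) : Prop := Squarefree d ∧ ¬ 2 ∣ d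

instance : DecidablePred Q := fun _ => instDecidableAnd

lemma Q_zero : ¬ Q 0 := fun h => (by simpa using h.1.ne_zero)

lemma Q.pos {d : ℕ} (h : Q d) : 0 < d := Nat.pos_of_ne_zero h.1.ne_zero

lemma squarefree_prod_primes {t : Finset ℕ} (h : ∀ p ∈ t, p.Prime) :
    Squarefree (∏ p ∈ t, p) := by
  induction t using Finset.induction_on with
  | empty => simpa using squarefree_one
  | @insert p s hx ih =>
    rw [Finset.prod_insert hx]
    have hp : p.Prime := h p (Finset.mem_insert_self _ _)
    have hcop : Nat.Coprime p (∏ q ∈ s, q) := by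
      refine Nat.Coprime.prod_right fun q hq => ?_
      have hq' : q.Prime := h q (Finset.mem_insert_of_mem hq)
      rw [Nat.coprime_primes hp hq']
      rintro rfl; exact hx hq
    exact (Nat.squarefree_mul hcop).mpr
      ⟨hp.squarefree, ih fun q hq => h q (Finset.mem_insert_of_mem hq)⟩

lemma W_eq_sum {g N : ℕ} (hg : g ∈ Finset.Icc 1 N) :
    W g = ∑ d ∈ Finset.Icc 1 N, (if Q d ∧ d ∣ g then a d else 0) := by
  obtain ⟨hg1, hgN⟩ := Finset.mem_Icc.mp hg
  set P := g.primeFactors.filter (fun q => q ≠ 2) with hP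
  have hPprime : ∀ q ∈ P, q.Prime := fun q hq =>
    Nat.prime_of_mem_primeFactors (Finset.mem_filter.mp hq).1
  have hPne2 : ∀ q ∈ P, q ≠ 2 := fun q hq => (Finset.mem_filter.mp hq).2
  have step1 : W g = ∑ t ∈ P.powerset, ∏ q ∈ t, (1 / ((q : ℝ) - 2)) := by
    rw [W, ← hP]
    have hcongr : ∀ q ∈ P, ((q : ℝ) - 1) / ((q : ℝ) - 2) = 1 / ((q : ℝ) - 2) + 1 := by
      intro q hq
      have h3 : 3 ≤ q := by
        have := (hPprime q hq).two_le
        have := hPne2 q hq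
        omega
      have h3' : (3 : ℝ) ≤ (q : ℝ) := by exact_mod_cast h3
      have hne : ((q : ℝ) - 2) ≠ 0 := by linarith
      field_simp
      ring
    rw [Finset.prod_congr rfl hcongr, Finset.prod_add]
    simp
  have hset : (Finset.Icc 1 N).filter (fun d => Q d ∧ d ∣ g)
      = P.powerset.image (fun t => ∏ q ∈ t, q) := by
    ext d
    simp only [Finset.mem_filter, Finset.mem_image, Finset.mem_powerset, Finset.mem_Icc]
    constructor
    · rintro ⟨⟨h1, hN⟩, ⟨hsf, hodd⟩, hdvd⟩
      refine ⟨d.primeFactors, ?_, Nat.prod_primeFactors_of_squarefree hsf⟩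
      intro q hq
      refine Finset.mem_filter.mpr ⟨?_, ?_⟩
      · exact Nat.mem_primeFactors.mpr ⟨Nat.prime_of_mem_primeFactors hq,
          (Nat.dvd_of_mem_primeFactors hq).trans hdvd, by omega⟩
      · rintro rfl; exact hodd (Nat.dvd_of_mem_primeFactors hq)
    · rintro ⟨t, ht, rfl⟩
      have hp : ∀ q ∈ t, q.Prime := fun q hq => hPprime q (ht hq)
      have hsub : t ⊆ g.primeFactors := ht.trans (Finset.filter_subset _ _)
      have hdvd : (∏ q ∈ t, q) ∣ g := by
        refine dvd_trans ?_ (Nat.prod_primeFactors_dvd g)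
        exact Finset.prod_dvd_prod_of_subset t g.primeFactors (fun q => q) hsub
      have hpos : 0 < ∏ q ∈ t, q := Finset.prod_pos fun q hq => (hp q hq).pos
      have hodd : ¬ 2 ∣ ∏ q ∈ t, q := by
        intro h2
        obtain ⟨q, hq, hq2⟩ := (Nat.Prime.prime Nat.prime_two).dvd_finset_prod_iff _ |>.mp h2
        have : q = 2 := ((Nat.prime_dvd_prime_iff_eq Nat.prime_two (hp q hq)).mp hq2).symm
        exact hPne2 q (ht hq) this
      exact ⟨⟨hpos, (Nat.le_of_dvd (by omega) hdvd).trans hgN⟩,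
        ⟨squarefree_prod_primes hp, hodd⟩, hdvd⟩
  have hinj : ∀ t1 ∈ P.powerset, ∀ t2 ∈ P.powerset,
      (∏ q ∈ t1, q) = (∏ q ∈ t2, q) → t1 = t2 := by
    intro t1 h1 t2 h2 heq
    have e1 := Nat.primeFactors_prod (fun p hp => hPprime p (Finset.mem_powerset.mp h1 hp))
    have e2 := Nat.primeFactors_prod (fun p hp => hPprime p (Finset.mem_powerset.mp h2 hp))
    rw [← e1, ← e2, heq]
  calc W g = ∑ t ∈ P.powerset, ∏ q ∈ t, (1 / ((q : ℝ) - 2)) := step1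
    _ = ∑ t ∈ P.powerset, a (∏ q ∈ t, q) := by
        refine Finset.sum_congr rfl fun t ht => ?_
        rw [a, Nat.primeFactors_prod (fun p hp => hPprime p (Finset.mem_powerset.mp ht hp))]
    _ = ∑ d ∈ P.powerset.image (fun t => ∏ q ∈ t, q), a d := (Finset.sum_image hinj).symm
    _ = ∑ d ∈ (Finset.Icc 1 N).filter (fun d => Q d ∧ d ∣ g), a d := by rw [hset]
    _ = ∑ d ∈ Finset.Icc 1 N, (if Q d ∧ d ∣ g then a d else 0) := Finset.sum_filter _ _




def M (r d N : ℕ) : ℕ :=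
  ((Finset.Icc 1 N).filter (fun g => (Even g ∧ g % 6 = r) ∧ d ∣ g)).card

lemma Icc_eq_Ioc (N : ℕ) : Finset.Icc 1 N = Finset.Ioc 0 N := Finset.Icc_add_one_left_eq_Ioc 0 N

lemma count0_3 {d : ℕ} (hd : Q d) (h3 : 3 ∣ d) (N : ℕ) : M 0 d N = N / (2 * d) := by
  rw [M, Icc_eq_Ioc]
  rw [show ((Finset.Ioc 0 N).filter (fun g => (Even g ∧ g % 6 = 0) ∧ d ∣ g))
      = ((Finset.Ioc 0 N).filter (fun g => 2 * d ∣ g)) from ?_, Nat.Ioc_filter_dvd_card_eq_div]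
  refine Finset.filter_congr fun g _ => ?_
  simp only [Nat.even_iff, ← Nat.dvd_iff_mod_eq_zero] at *
  constructor
  · rintro ⟨⟨h2, h6⟩, hdg⟩
    exact (Nat.Coprime.mul_dvd_of_dvd_of_dvd
      ((Nat.Prime.coprime_iff_not_dvd Nat.prime_two).mpr hd.2) h2 hdg)
  · intro h
    have h2 : 2 ∣ g := (dvd_mul_right 2 d).trans h
    have hdg : d ∣ g := (dvd_mul_left d 2).trans h
    have h3g : 3 ∣ g := h3.trans hdg
    exact ⟨⟨h2, Nat.Coprime.mul_dvd_of_dvd_of_dvd (by norm_num) h2 h3g⟩, hdg⟩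

lemma count0_n3 {d : ℕ} (hd : Q d) (h3 : ¬ 3 ∣ d) (N : ℕ) : M 0 d N = N / (6 * d) := by
  rw [M, Icc_eq_Ioc]
  rw [show ((Finset.Ioc 0 N).filter (fun g => (Even g ∧ g % 6 = 0) ∧ d ∣ g))
      = ((Finset.Ioc 0 N).filter (fun g => 6 * d ∣ g)) from ?_, Nat.Ioc_filter_dvd_card_eq_div]
  refine Finset.filter_congr fun g _ => ?_
  have hcop : Nat.Coprime 6 d := by
    have h2 : ¬ 2 ∣ d := hd.2
    rcases Nat.coprime_or_dvd_of_prime Nat.prime_two d with h | h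
    · rcases Nat.coprime_or_dvd_of_prime Nat.prime_three d with h' | h'
      · exact (show (6:ℕ) = 2*3 by norm_num) ▸ Nat.Coprime.mul h h'
      · exact absurd h' h3
    · exact absurd h h2
  simp only [Nat.even_iff, ← Nat.dvd_iff_mod_eq_zero] at *
  constructor
  · rintro ⟨⟨h2, h6⟩, hdg⟩
    exact Nat.Coprime.mul_dvd_of_dvd_of_dvd hcop h6 hdg
  · intro h
    have h6 : 6 ∣ g := (dvd_mul_right 6 d).trans h
    exact ⟨⟨(by norm_num : (2:ℕ) ∣ 6).trans h6, h6⟩, (dvd_mul_left d 6).trans h⟩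

lemma count2_3 {d : ℕ} (h3 : 3 ∣ d) (N : ℕ) : M 2 d N = 0 := by
  rw [M, Finset.card_eq_zero, Finset.filter_eq_empty_iff]
  rintro g _ ⟨⟨_, h6⟩, hdg⟩
  have h3g : 3 ∣ g := h3.trans hdg
  have := Nat.mod_mod_of_dvd g (by norm_num : (3:ℕ) ∣ 6)
  omega

lemma count_mod (c : ℕ) (h1 : 0 < c) (h2 : c < 6) (M : ℕ) :
    ((Finset.Ioc 0 M).filter (fun h => h % 6 = c)).card = (M + 6 - c) / 6 := by
  induction M with
  | zero => simp; omega
  | succ M ih =>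
    rw [show Finset.Ioc 0 (M+1) = insert (M+1) (Finset.Ioc 0 M) from ?_]
    · rw [Finset.filter_insert]
      by_cases hc : (M + 1) % 6 = c
      · rw [if_pos hc, Finset.card_insert_of_notMem (by simp), ih]
        omega
      · rw [if_neg hc, ih]
        omega
    · ext x; simp [Finset.mem_Ioc, Finset.mem_insert]; omega

lemma count2_n3 {d : ℕ} (hd : Q d) (h3 : ¬ 3 ∣ d) (N : ℕ) :
    M 2 d N = (N / d + 6 - (if d % 6 = 1 then 2 else 4)) / 6 := by
  have hd2 : d % 2 = 1 := by
    have := hd.2; rw [Nat.dvd_iff_mod_eq_zero] at this; omega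
  have hd3 : d % 3 ≠ 0 := fun h => h3 (Nat.dvd_of_mod_eq_zero h)
  have hd6 : d % 6 = 1 ∨ d % 6 = 5 := by omega
  have hdpos : 0 < d := Nat.pos_of_ne_zero hd.1.ne_zero
  set c : ℕ := if d % 6 = 1 then 2 else 4 with hc
  have hkey : ∀ h : ℕ, (d * h) % 6 = 2 ↔ h % 6 = c := by
    intro h
    rw [Nat.mul_mod]
    have hh6 : h % 6 < 6 := Nat.mod_lt _ (by norm_num)
    rcases hd6 with h6 | h6 <;>
      [(have : c = 2 := by simp [hc, h6]); (have : c = 4 := by simp [hc, h6])] <;>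
      rw [h6, this] <;> omega
  rw [M, Icc_eq_Ioc, ← count_mod c (by rcases hd6 with h|h <;> simp [hc, h]) (by rcases hd6 with h|h <;> simp [hc, h]) (N / d)]
  refine Finset.card_bij' (fun g _ => g / d) (fun h _ => d * h) ?_ ?_ ?_ ?_
  · intro g hg
    simp only [Finset.mem_filter, Finset.mem_Ioc] at hg ⊢
    obtain ⟨⟨hg0, hgN⟩, ⟨_, h6⟩, hdg⟩ := hg
    obtain ⟨h, rfl⟩ := hdg
    rw [Nat.mul_div_cancel_left h hdpos]
    refine ⟨⟨Nat.pos_of_ne_zero (by rintro rfl; simp at hg0), 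
      Nat.le_div_iff_mul_le hdpos |>.mpr (by linarith [hgN])⟩, (hkey h).mp h6⟩
  · intro h hh
    simp only [Finset.mem_filter, Finset.mem_Ioc] at hh ⊢
    obtain ⟨⟨hh0, hhN⟩, hmod⟩ := hh
    have h6 : (d * h) % 6 = 2 := (hkey h).mpr hmod
    refine ⟨⟨by positivity, (Nat.le_div_iff_mul_le hdpos).mp hhN |>.trans_eq' (by ring)⟩,
      ⟨?_, h6⟩, dvd_mul_right d h⟩
    · rw [Nat.even_iff]
      have := Nat.mod_mod_of_dvd (d*h) (by norm_num : (2:ℕ) ∣ 6)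
      omega
  · intro g hg
    simp only [Finset.mem_filter, Finset.mem_Ioc] at hg
    exact Nat.mul_div_cancel' hg.2.2
  · intro h hh
    exact Nat.mul_div_cancel_left h hdpos




lemma a_nonneg (d : ℕ) : 0 ≤ a d := by
  refine Finset.prod_nonneg fun q hq => ?_
  have h2 : 2 ≤ q := (Nat.prime_of_mem_primeFactors hq).two_le
  have : (2:ℝ) ≤ (q:ℝ) := by exact_mod_cast h2
  have : (0:ℝ) ≤ (q:ℝ) - 2 := by linarith
  exact one_div_nonneg.mpr this

lemma rpow_23_le {q : ℕ} (hq : 5 ≤ q) : (q : ℝ) ^ ((2:ℝ)/3) ≤ (q : ℝ) - 2 := by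
  have hq5 : (5:ℝ) ≤ (q:ℝ) := by exact_mod_cast hq
  have h0 : (0:ℝ) ≤ (q:ℝ) := by linarith
  have h1 : (0:ℝ) ≤ (q:ℝ) - 2 := by linarith
  have key : ((q:ℝ) ^ ((2:ℝ)/3)) ^ (3:ℕ) ≤ ((q:ℝ) - 2) ^ (3:ℕ) := by
    have e : ((q:ℝ) ^ ((2:ℝ)/3)) ^ (3:ℕ) = (q:ℝ) ^ (2:ℕ) := by
      rw [← Real.rpow_natCast ((q:ℝ) ^ ((2:ℝ)/3)) 3, ← Real.rpow_mul h0,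
        ← Real.rpow_natCast (q:ℝ) 2]
      norm_num
    rw [e]
    nlinarith [mul_nonneg (mul_nonneg (sub_nonneg.2 hq5) (sub_nonneg.2 hq5)) h0,
      mul_nonneg (sub_nonneg.2 hq5) h0, sq_nonneg ((q:ℝ) - 5)]
  exact le_of_pow_le_pow_left₀ (by norm_num) h1 key

lemma a_le {d : ℕ} (hd : Q d) : a d ≤ 3 * (d : ℝ) ^ (-(2:ℝ)/3) := by
  obtain ⟨hsf, hodd⟩ := hd
  have hdpos : 0 < d := Nat.pos_of_ne_zero hsf.ne_zero
  have hdR : (0:ℝ) < d := by exact_mod_cast hdpos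
  set s := d.primeFactors with hs
  have hprime : ∀ q ∈ s, q.Prime := fun q hq => Nat.prime_of_mem_primeFactors hq
  have hq3 : ∀ q ∈ s, 3 ≤ q := by
    intro q hq
    have h2 := (hprime q hq).two_le
    rcases Nat.lt_or_ge q 3 with h | h
    · exfalso
      have : q = 2 := by omega
      exact hodd (this ▸ Nat.dvd_of_mem_primeFactors hq)
    · exact h
  -- key : ∏ q^{2/3} ≤ 3 * ∏ (q - 2)
  have hposfac : ∀ q ∈ s, (0:ℝ) < (q:ℝ) - 2 := by
    intro q hq
    have := hq3 q hq
    have : (3:ℝ) ≤ (q:ℝ) := by exact_mod_cast this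
    linarith
  have hprodpos : 0 < ∏ q ∈ s, ((q:ℝ) - 2) := Finset.prod_pos hposfac
  have key : (d:ℝ) ^ ((2:ℝ)/3) ≤ 3 * ∏ q ∈ s, ((q:ℝ) - 2) := by
    have hd_eq : (d:ℝ) = ∏ q ∈ s, (q:ℝ) := by
      conv_lhs => rw [← Nat.prod_primeFactors_of_squarefree hsf]
      push_cast
      rfl
    have hrw : (d:ℝ) ^ ((2:ℝ)/3) = ∏ q ∈ s, (q:ℝ) ^ ((2:ℝ)/3) := by
      rw [hd_eq, ← Real.finset_prod_rpow s _ (fun q _ => by positivity)]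
    rw [hrw]
    by_cases h3 : 3 ∈ s
    · rw [← Finset.mul_prod_erase s _ h3, ← Finset.mul_prod_erase s _ h3]
      have h33 : (3:ℝ) ^ ((2:ℝ)/3) ≤ 3 := by
        calc (3:ℝ) ^ ((2:ℝ)/3) ≤ (3:ℝ) ^ (1:ℝ) :=
          Real.rpow_le_rpow_of_exponent_le (by norm_num) (by norm_num)
        _ = 3 := Real.rpow_one 3
      have hrest : ∏ q ∈ s.erase 3, (q:ℝ) ^ ((2:ℝ)/3) ≤ ∏ q ∈ s.erase 3, ((q:ℝ) - 2) := by
        refine Finset.prod_le_prod (fun q hq => by positivity) fun q hq => ?_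
        refine rpow_23_le ?_
        have hmem := Finset.mem_of_mem_erase hq
        have hne := Finset.ne_of_mem_erase hq
        have := hq3 q hmem
        have hp := hprime q hmem
        rcases Nat.lt_or_ge q 5 with h | h
        · exfalso
          have h34 : q = 3 ∨ q = 4 := by omega
          rcases h34 with rfl | rfl
          · exact hne rfl
          · exact absurd hp (by norm_num)
        · exact h
      have hrpos : (0:ℝ) ≤ ∏ q ∈ s.erase 3, (q:ℝ) ^ ((2:ℝ)/3) :=
        Finset.prod_nonneg fun q hq => by positivity
      calc (3:ℝ)^((2:ℝ)/3) * ∏ q ∈ s.erase 3, (q:ℝ) ^ ((2:ℝ)/3)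
          ≤ 3 * ∏ q ∈ s.erase 3, ((q:ℝ) - 2) := by
            apply mul_le_mul h33 hrest hrpos (by norm_num)
        _ = 3 * (((3:ℝ) - 2) * ∏ q ∈ s.erase 3, ((q:ℝ) - 2)) := by ring
    · have hrest : ∏ q ∈ s, (q:ℝ) ^ ((2:ℝ)/3) ≤ ∏ q ∈ s, ((q:ℝ) - 2) := by
        refine Finset.prod_le_prod (fun q hq => by positivity) fun q hq => ?_
        refine rpow_23_le ?_
        have := hq3 q hq
        have hp := hprime q hq
        rcases Nat.lt_or_ge q 5 with h | h
        · exfalso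
          have : q = 3 ∨ q = 4 := by omega
          rcases this with rfl | rfl
          · exact h3 hq
          · norm_num at hp
        · exact h
      linarith
  have ha_eq : a d = (∏ q ∈ s, ((q:ℝ) - 2))⁻¹ := by
    rw [a, ← Finset.prod_inv_distrib]
    exact Finset.prod_congr rfl fun q hq => one_div _
  rw [ha_eq]
  have hneg : (0:ℝ) < (d:ℝ) ^ (-(2:ℝ)/3) := Real.rpow_pos_of_pos hdR _
  have hmul := mul_le_mul_of_nonneg_left key hneg.le
  have hone : (d:ℝ) ^ (-(2:ℝ)/3) * (d:ℝ) ^ ((2:ℝ)/3) = 1 := by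
    rw [← Real.rpow_add hdR]; norm_num
  rw [hone] at hmul
  calc (∏ q ∈ s, ((q:ℝ) - 2))⁻¹ = (∏ q ∈ s, ((q:ℝ) - 2))⁻¹ * 1 := (mul_one _).symm
    _ ≤ (∏ q ∈ s, ((q:ℝ) - 2))⁻¹ * ((d:ℝ) ^ (-(2:ℝ)/3) * (3 * ∏ q ∈ s, ((q:ℝ) - 2))) :=
        mul_le_mul_of_nonneg_left hmul (inv_nonneg.mpr hprodpos.le)
    _ = 3 * (d:ℝ) ^ (-(2:ℝ)/3) := by
        rw [show (d:ℝ) ^ (-(2:ℝ)/3) * (3 * ∏ q ∈ s, ((q:ℝ) - 2))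
          = (3 * (d:ℝ) ^ (-(2:ℝ)/3)) * ∏ q ∈ s, ((q:ℝ) - 2) by ring,
          ← mul_assoc]
        rw [mul_comm ((∏ q ∈ s, ((q:ℝ) - 2))⁻¹) _, mul_assoc,
          inv_mul_cancel₀ hprodpos.ne', mul_one]


/-- The density of `{g : g ≡ r mod 6, Even g, d ∣ g}`. -/
noncomputable def rho (r d : ℕ) : ℝ :=
  if 3 ∣ d then (if r = 0 then 1 / (2 * (d:ℝ)) else 0) else 1 / (6 * (d:ℝ))

lemma div_est (x m : ℕ) (hm : 0 < m) : |((x / m : ℕ) : ℝ) - (x : ℝ) / m| ≤ 1 := by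
  have hmR : (0:ℝ) < m := by exact_mod_cast hm
  have h1 : ((x / m : ℕ) : ℝ) ≤ (x : ℝ) / m := Nat.cast_div_le
  have h2 : (x : ℝ) / m - 1 ≤ ((x / m : ℕ) : ℝ) := by
    have hdm := Nat.div_add_mod x m
    have hlt : x % m < m := Nat.mod_lt _ hm
    have hdmR : (m:ℝ) * ((x/m : ℕ):ℝ) + ((x % m : ℕ):ℝ) = (x:ℝ) := by exact_mod_cast hdm
    have hltR : ((x % m : ℕ):ℝ) < (m:ℝ) := by exact_mod_cast hlt
    rw [sub_le_iff_le_add, div_le_iff₀ hmR]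
    nlinarith
  rw [abs_le]
  constructor <;> linarith

lemma M_est {r d : ℕ} (hd : Q d) (hr : r = 0 ∨ r = 2) (N : ℕ) :
    |(M r d N : ℝ) - rho r d * N| ≤ 2 := by
  have hdpos : 0 < d := Nat.pos_of_ne_zero hd.1.ne_zero
  have hdR : (0:ℝ) < d := by exact_mod_cast hdpos
  by_cases h3 : 3 ∣ d
  · rcases hr with rfl | rfl
    · rw [count0_3 hd h3, rho, if_pos h3, if_pos rfl]
      have := div_est N (2*d) (by omega)
      have hcast : ((2*d : ℕ):ℝ) = 2 * (d:ℝ) := by push_cast; ring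
      rw [hcast] at this
      calc |((N / (2*d) : ℕ):ℝ) - 1 / (2 * (d:ℝ)) * N| 
          = |((N / (2*d) : ℕ):ℝ) - (N:ℝ) / (2 * (d:ℝ))| := by rw [div_mul_eq_mul_div, one_mul]
        _ ≤ 1 := this
        _ ≤ 2 := by norm_num
    · rw [count2_3 h3, rho, if_pos h3]
      simp
  · have hc : ((6*d : ℕ):ℝ) = 6 * (d:ℝ) := by push_cast; ring
    rcases hr with rfl | rfl
    · rw [count0_n3 hd h3, rho, if_neg h3]
      have := div_est N (6*d) (by omega)
      rw [hc] at this
      calc |((N / (6*d) : ℕ):ℝ) - 1 / (6 * (d:ℝ)) * N| 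
          = |((N / (6*d) : ℕ):ℝ) - (N:ℝ) / (6 * (d:ℝ))| := by rw [div_mul_eq_mul_div, one_mul]
        _ ≤ 1 := this
        _ ≤ 2 := by norm_num
    · rw [count2_n3 hd h3, rho, if_neg h3]
      set c : ℕ := if d % 6 = 1 then 2 else 4 with hcdef
      have hc24 : c = 2 ∨ c = 4 := by rw [hcdef]; split <;> simp
      clear_value c
      have hc2 : 2 ≤ c := by rcases hc24 with rfl | rfl <;> norm_num
      have hc4 : c ≤ 4 := by rcases hc24 with rfl | rfl <;> norm_num
      set A : ℕ := N / d with hA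
      have e1 : |(((A + 6 - c)/6 : ℕ):ℝ) - ((A + 6 - c : ℕ):ℝ)/6| ≤ 1 := div_est _ 6 (by norm_num)
      have hcast : ((A + 6 - c : ℕ):ℝ) = (A:ℝ) + 6 - (c:ℝ) := by
        have hle : c ≤ A + 6 := le_trans hc4 (le_trans (by norm_num) (Nat.le_add_left 6 A))
        push_cast [hle]
        ring
      have e2 : |((A:ℝ) + 6 - (c:ℝ))/6 - (A:ℝ)/6| ≤ 2/3 := by
        have hc2R : (2:ℝ) ≤ (c:ℝ) := by exact_mod_cast hc2
        have hc4R : (c:ℝ) ≤ 4 := by exact_mod_cast hc4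
        rw [abs_le]
        constructor <;> [linarith; linarith]
      have e3 : |(A:ℝ)/6 - (N:ℝ) / (6 * (d:ℝ))| ≤ 1/6 := by
        have hdiv := div_est N d hdpos
        have h6 : (N:ℝ) / (6 * (d:ℝ)) = ((N:ℝ)/(d:ℝ))/6 := by
          rw [div_div]; ring_nf
        rw [h6]
        calc |(A:ℝ)/6 - (N:ℝ)/(d:ℝ)/6| = |((A:ℝ) - (N:ℝ)/(d:ℝ))/6| := by rw [sub_div]
          _ = |(A:ℝ) - (N:ℝ)/(d:ℝ)|/6 := by rw [abs_div, abs_of_nonneg (by norm_num : (0:ℝ) ≤ 6)]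
          _ ≤ 1/6 := by
            have h1 : |(A:ℝ) - (N:ℝ)/(d:ℝ)| ≤ 1 := hdiv
            linarith
      have goal_eq : 1 / (6 * (d:ℝ)) * (N:ℝ) = (N:ℝ) / (6 * (d:ℝ)) := by
        rw [div_mul_eq_mul_div, one_mul]
      rw [goal_eq]
      calc |(((A + 6 - c)/6 : ℕ):ℝ) - (N:ℝ)/(6*(d:ℝ))|
          ≤ |(((A + 6 - c)/6 : ℕ):ℝ) - ((A + 6 - c : ℕ):ℝ)/6|
            + |((A + 6 - c : ℕ):ℝ)/6 - (A:ℝ)/6|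
            + |(A:ℝ)/6 - (N:ℝ)/(6*(d:ℝ))| := by
              have := abs_sub_le (((A + 6 - c)/6 : ℕ):ℝ) (((A + 6 - c : ℕ):ℝ)/6) ((N:ℝ)/(6*(d:ℝ)))
              have h2 := abs_sub_le (((A + 6 - c : ℕ):ℝ)/6) ((A:ℝ)/6) ((N:ℝ)/(6*(d:ℝ)))
              linarith
        _ ≤ 1 + 2/3 + 1/6 := by
              have e2' : |((A + 6 - c : ℕ):ℝ)/6 - (A:ℝ)/6| ≤ 2/3 := by
                rw [show ((A + 6 - c : ℕ):ℝ)/6 = ((A:ℝ) + 6 - (c:ℝ))/6 by rw [hcast]]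
                exact e2
              linarith [e1, e3]
        _ ≤ 2 := by norm_num


lemma M_le {r d : ℕ} (hd : Q d) (N : ℕ) : (M r d N : ℝ) ≤ (N : ℝ) / (2 * (d:ℝ)) := by
  have hdpos : 0 < d := Nat.pos_of_ne_zero hd.1.ne_zero
  have hnat : M r d N ≤ N / (2 * d) := by
    rw [M, Icc_eq_Ioc, ← Nat.Ioc_filter_dvd_card_eq_div N (2*d)]
    apply Finset.card_le_card
    refine Finset.monotone_filter_right _ ?_
    intro g _ hg
    exact Nat.Coprime.mul_dvd_of_dvd_of_dvd
      ((Nat.Prime.coprime_iff_not_dvd Nat.prime_two).mpr hd.2) hg.1.1.two_dvd hg.2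
  calc (M r d N : ℝ) ≤ ((N / (2*d) : ℕ) : ℝ) := by exact_mod_cast hnat
    _ ≤ (N : ℝ) / ((2*d : ℕ) : ℝ) := Nat.cast_div_le
    _ = (N : ℝ) / (2 * (d:ℝ)) := by push_cast; ring

lemma rho_nonneg (r d : ℕ) : 0 ≤ rho r d := by
  have h : (0:ℝ) ≤ (d:ℝ) := Nat.cast_nonneg d
  rw [rho]
  split
  · split
    · positivity
    · exact le_refl 0
  · positivity

lemma rho_le (r d : ℕ) : rho r d ≤ 1 / (2 * (d:ℝ)) := by
  have h0 : (0:ℝ) ≤ (d:ℝ) := Nat.cast_nonneg d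
  rw [rho]
  rcases Nat.eq_zero_or_pos d with rfl | hd
  · simp [rho]
  have hdR : (0:ℝ) < (d:ℝ) := by exact_mod_cast hd
  split
  · split
    · exact le_refl _
    · positivity
  · apply div_le_div_of_nonneg_left (by norm_num) (by positivity) ?_
    nlinarith

noncomputable def wgt (r d : ℕ) : ℝ := if Q d then a d * rho r d else 0
noncomputable def bb (d : ℕ) : ℝ := if Q d then a d / (2 * (d:ℝ)) else 0
noncomputable def uu (d : ℕ) : ℝ := if Q d ∧ 3 ∣ d then a d / (2 * (d:ℝ)) else 0

lemma bb_nonneg (d : ℕ) : 0 ≤ bb d := by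
  rw [bb]; split
  · have := a_nonneg d; have : (0:ℝ) ≤ (d:ℝ) := Nat.cast_nonneg d; positivity
  · exact le_refl 0

lemma wgt_nonneg (r d : ℕ) : 0 ≤ wgt r d := by
  rw [wgt]; split
  · exact mul_nonneg (a_nonneg d) (rho_nonneg r d)
  · exact le_refl 0

lemma uu_nonneg (d : ℕ) : 0 ≤ uu d := by
  rw [uu]; split
  · have := a_nonneg d; have : (0:ℝ) ≤ (d:ℝ) := Nat.cast_nonneg d; positivity
  · exact le_refl 0

lemma wgt_le_bb (r d : ℕ) : wgt r d ≤ bb d := by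
  rw [wgt, bb]; split
  · rw [div_eq_mul_one_div]
    exact mul_le_mul_of_nonneg_left (rho_le r d) (a_nonneg d)
  · exact le_refl 0

lemma uu_le_bb (d : ℕ) : uu d ≤ bb d := by
  rw [uu, bb]
  split
  · rename_i h; rw [if_pos h.1]
  · split
    · have h0 : (0:ℝ) ≤ (d:ℝ) := Nat.cast_nonneg d
      have := a_nonneg d
      positivity
    · exact le_refl 0

lemma bb_le (d : ℕ) : bb d ≤ (3/2) * (d : ℝ) ^ (-(5:ℝ)/3) := by
  rw [bb]
  split
  · rename_i hQ
    have hdpos : 0 < d := Nat.pos_of_ne_zero hQ.1.ne_zero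
    have hdR : (0:ℝ) < (d:ℝ) := by exact_mod_cast hdpos
    have h1 : a d / (2 * (d:ℝ)) ≤ (3 * (d:ℝ) ^ (-(2:ℝ)/3)) / (2 * (d:ℝ)) := by
      gcongr
      exact a_le hQ
    have h2 : (3 * (d:ℝ) ^ (-(2:ℝ)/3)) / (2 * (d:ℝ)) = (3/2) * (d : ℝ) ^ (-(5:ℝ)/3) := by
      rw [show (-(5:ℝ)/3) = (-(2:ℝ)/3) + (-1 : ℝ) by norm_num, Real.rpow_add hdR,
        Real.rpow_neg_one]
      field_simp
    linarith
  · exact mul_nonneg (by norm_num) (Real.rpow_nonneg (Nat.cast_nonneg d) _)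

lemma summable_bb : Summable bb := by
  refine Summable.of_nonneg_of_le bb_nonneg (fun d => bb_le d) ?_
  exact (Real.summable_nat_rpow.mpr (by norm_num)).mul_left _

lemma summable_wgt (r : ℕ) : Summable (wgt r) :=
  Summable.of_nonneg_of_le (wgt_nonneg r) (wgt_le_bb r) summable_bb

lemma summable_uu : Summable uu :=
  Summable.of_nonneg_of_le uu_nonneg uu_le_bb summable_bb

noncomputable def L (r : ℕ) : ℝ := ∑' d, wgt r d

lemma Q_one : Q 1 := ⟨squarefree_one, by norm_num⟩

lemma L2_ge : 1/6 ≤ L 2 := by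
  have h1 : wgt 2 1 = 1/6 := by
    rw [wgt, if_pos Q_one, a, rho]
    norm_num
  calc (1:ℝ)/6 = wgt 2 1 := h1.symm
    _ ≤ L 2 := Summable.le_tsum (summable_wgt 2) 1 (fun i _ => wgt_nonneg 2 i)

lemma wgt0_eq (d : ℕ) : wgt 0 d = wgt 2 d + uu d := by
  by_cases hQ : Q d <;> by_cases h3 : 3 ∣ d <;>
    simp [wgt, uu, rho, hQ, h3] <;> ring

lemma uu_3e (e : ℕ) : uu (3 * e) = wgt 2 e := by
  by_cases hQ : Q e
  · by_cases h3 : 3 ∣ e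
    · have hnsf : ¬ Squarefree (3 * e) := by
        intro hsf
        have h9 : 3 * 3 ∣ 3 * e := mul_dvd_mul_left 3 h3
        exact (by norm_num : ¬ IsUnit (3:ℕ)) (hsf 3 h9)
      rw [uu, if_neg (fun h => hnsf h.1.1), wgt, if_pos hQ, rho, if_pos h3]
      norm_num
    · have he0 : e ≠ 0 := hQ.1.ne_zero
      have hQ3e : Q (3 * e) := by
        constructor
        · exact (Nat.squarefree_mul ((Nat.Prime.coprime_iff_not_dvd Nat.prime_three).mpr h3)).mpr
            ⟨Irreducible.squarefree Nat.prime_three, hQ.1⟩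
        · intro h2
          rcases (Nat.Prime.dvd_mul Nat.prime_two).mp h2 with h | h
          · norm_num at h
          · exact hQ.2 h
      have h33 : (3:ℕ) ∣ 3 * e := dvd_mul_right 3 e
      have ha : a (3 * e) = a e := by
        rw [a, a, Nat.primeFactors_mul (by norm_num) he0]
        have h3n : (3:ℕ).primeFactors = {3} := Nat.Prime.primeFactors Nat.prime_three
        rw [h3n]
        have hdisj : Disjoint ({3} : Finset ℕ) e.primeFactors := by
          simp only [Finset.disjoint_singleton_left]
          intro hmem
          exact h3 (Nat.dvd_of_mem_primeFactors hmem)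
        rw [Finset.prod_union hdisj]
        norm_num
      rw [uu, if_pos ⟨hQ3e, h33⟩, wgt, if_pos hQ, ha, rho, if_neg h3]
      have : ((3 * e : ℕ) : ℝ) = 3 * (e : ℝ) := by push_cast; ring
      rw [this, div_eq_mul_one_div]
      ring_nf
  · have : ¬ Q (3 * e) ∨ wgt 2 e = 0 := by
      left
      intro hQ3
      apply hQ
      constructor
      · exact hQ3.1.squarefree_of_dvd (dvd_mul_left e 3)
      · intro h2
        exact hQ3.2 (h2.mul_left 3)
    rcases this with h | h
    · rw [uu, if_neg (fun hh => h hh.1), wgt, if_neg hQ]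
    · rw [wgt, if_neg hQ] at *
      rw [uu, if_neg (fun hh : Q (3*e) ∧ _ => hQ ⟨hh.1.1.squarefree_of_dvd (dvd_mul_left e 3),
          fun h2 => hh.1.2 (h2.mul_left 3)⟩)]

lemma tsum_uu : ∑' d, uu d = L 2 := by
  rw [L]
  have hinj : Function.Injective (fun e : ℕ => 3 * e) := fun x y h => by
    dsimp only at h; omega
  have hsupp : Function.support uu ⊆ Set.range (fun e : ℕ => 3 * e) := by
    intro d hd
    rw [Function.mem_support, uu] at hd
    split at hd
    · rename_i h
      obtain ⟨e, rfl⟩ := h.2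
      exact ⟨e, rfl⟩
    · exact absurd rfl hd
  rw [← Function.Injective.tsum_eq hinj hsupp]
  exact tsum_congr uu_3e

lemma L0_eq : L 0 = 2 * L 2 := by
  have : L 0 = L 2 + ∑' d, uu d := by
    rw [L, L, ← Summable.tsum_add (summable_wgt 2) summable_uu]
    exact tsum_congr wgt0_eq
  rw [this, tsum_uu]
  ring


noncomputable def TN (r N : ℕ) : ℝ :=
  ∑ g ∈ (Finset.Icc 1 N).filter (fun g => Even g ∧ g % 6 = r), W g

lemma TN_eq (r N : ℕ) : TN r N = ∑ d ∈ Finset.range (N+1),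
    (if Q d then a d * (M r d N : ℝ) else 0) := by
  have h1 : TN r N = ∑ g ∈ (Finset.Icc 1 N).filter (fun g => Even g ∧ g % 6 = r),
      ∑ d ∈ Finset.Icc 1 N, (if Q d ∧ d ∣ g then a d else 0) :=
    Finset.sum_congr rfl fun g hg => W_eq_sum (Finset.mem_of_mem_filter g hg)
  rw [h1, Finset.sum_comm]
  have h2 : ∀ d, ∑ g ∈ (Finset.Icc 1 N).filter (fun g => Even g ∧ g % 6 = r),
      (if Q d ∧ d ∣ g then a d else 0) = (if Q d then a d * (M r d N : ℝ) else 0) := by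
    intro d
    by_cases hQ : Q d
    · simp only [hQ, true_and, if_pos]
      rw [← Finset.sum_filter, Finset.sum_const, Finset.filter_filter, nsmul_eq_mul]
      rw [M, mul_comm]
    · simp only [hQ, false_and, if_neg, if_false]
      simp
  rw [Finset.sum_congr rfl (fun d _ => h2 d)]
  apply Finset.sum_subset
  · intro x hx
    rw [Finset.mem_Icc] at hx; rw [Finset.mem_range]; omega
  · intro x hx hnx
    have hx0 : x = 0 := by
      rw [Finset.mem_range] at hx; rw [Finset.mem_Icc] at hnx; omega
    rw [hx0, if_neg Q_zero]

lemma TN_tendsto {r : ℕ} (hr : r = 0 ∨ r = 2) :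
    Tendsto (fun N : ℕ => TN r N / N) atTop (nhds (L r)) := by
  have hBsum : Summable bb := summable_bb
  have hW : Summable (wgt r) := summable_wgt r
  rw [Metric.tendsto_atTop]
  intro ε hε
  have hε3 : 0 < ε/3 := by linarith
  obtain ⟨K1, hK1⟩ := (Metric.tendsto_atTop.mp hW.hasSum.tendsto_sum_nat) (ε/3) hε3
  obtain ⟨K2, hK2⟩ := (Metric.tendsto_atTop.mp hBsum.hasSum.tendsto_sum_nat) (ε/3) hε3
  set K := max K1 K2 with hK
  set C := ∑ d ∈ Finset.range K, 2 * a d with hC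
  have hC0 : 0 ≤ C := Finset.sum_nonneg fun d _ => by
    have := a_nonneg d; linarith
  obtain ⟨N1, hN1⟩ :=
    (Metric.tendsto_atTop.mp (tendsto_const_div_atTop_nhds_zero_nat C)) (ε/3) hε3
  refine ⟨max (max K 1) N1, fun N hN => ?_⟩
  have hNK : K ≤ N := le_trans (le_max_left _ _) (le_trans (le_max_left _ _) hN)
  have hN1' : N1 ≤ N := le_trans (le_max_right _ _) hN
  have hNpos : 1 ≤ N := le_trans (le_max_right _ _) (le_trans (le_max_left _ _) hN)
  have hNR : (0:ℝ) < N := by exact_mod_cast hNpos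
  set v : ℕ → ℝ := fun d => if Q d then a d * (M r d N : ℝ) else 0 with hv
  have hTN : TN r N = ∑ d ∈ Finset.range (N+1), v d := TN_eq r N
  have hsub : Finset.range K ⊆ Finset.range (N+1) := by
    intro x hx; rw [Finset.mem_range] at *; omega
  have hsplit : ∑ d ∈ Finset.range (N+1), v d
      = ∑ d ∈ Finset.range (N+1) \ Finset.range K, v d + ∑ d ∈ Finset.range K, v d :=
    (Finset.sum_sdiff hsub).symm
  have hv_nonneg : ∀ d, 0 ≤ v d := by
    intro d; rw [hv]; dsimp only
    split
    · exact mul_nonneg (a_nonneg d) (Nat.cast_nonneg _)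
    · exact le_refl 0
  have hv_le : ∀ d, v d ≤ (N:ℝ) * bb d := by
    intro d; rw [hv, bb]; dsimp only
    split
    · rename_i hQ
      calc a d * (M r d N : ℝ) ≤ a d * ((N:ℝ) / (2 * (d:ℝ))) :=
            mul_le_mul_of_nonneg_left (M_le hQ N) (a_nonneg d)
        _ = (N:ℝ) * (a d / (2 * (d:ℝ))) := by ring
    · simp
  have hterm : ∀ d, |v d / N - wgt r d| ≤ 2 * a d / N := by
    intro d
    rw [hv, wgt]; dsimp only
    split
    · rename_i hQ
      have heq : a d * (M r d N : ℝ) / N - a d * rho r d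
          = a d * ((M r d N : ℝ) - rho r d * N) / N := by
        field_simp
      rw [heq, abs_div, abs_of_pos hNR, abs_mul, abs_of_nonneg (a_nonneg d)]
      have h1 : a d * |(M r d N : ℝ) - rho r d * N| ≤ a d * 2 :=
        mul_le_mul_of_nonneg_left (M_est hQ hr N) (a_nonneg d)
      calc a d * |(M r d N : ℝ) - rho r d * N| / N ≤ a d * 2 / N := by
            gcongr
        _ = 2 * a d / N := by ring
    · simp only [zero_div, sub_zero, abs_zero, zero_sub, abs_neg]
      have := a_nonneg d
      positivity
  -- E3 bound
  have hwle : ∑ d ∈ Finset.range K, wgt r d ≤ L r :=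
    Summable.sum_le_tsum _ (fun i _ => wgt_nonneg r i) hW
  have hE3 : L r - ∑ d ∈ Finset.range K, wgt r d < ε/3 := by
    have := hK1 K (le_max_left _ _)
    rw [Real.dist_eq, abs_sub_lt_iff] at this
    rw [L]
    linarith [this.2]
  -- E2 bound
  have hbble : ∑ d ∈ Finset.range (N+1), bb d ≤ ∑' d, bb d :=
    Summable.sum_le_tsum _ (fun i _ => bb_nonneg i) hBsum
  have hbbK : ∑' d, bb d - ∑ d ∈ Finset.range K, bb d < ε/3 := by
    have := hK2 K (le_max_right _ _)
    rw [Real.dist_eq, abs_sub_lt_iff] at this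
    linarith [this.2]
  have hsdiff_bb : ∑ d ∈ Finset.range (N+1) \ Finset.range K, bb d < ε/3 := by
    have := Finset.sum_sdiff (f := bb) hsub
    linarith
  have hE2 : 0 ≤ ∑ d ∈ Finset.range (N+1) \ Finset.range K, v d ∧
      ∑ d ∈ Finset.range (N+1) \ Finset.range K, v d ≤ (N:ℝ) * (ε/3) := by
    constructor
    · exact Finset.sum_nonneg fun d _ => hv_nonneg d
    · calc ∑ d ∈ Finset.range (N+1) \ Finset.range K, v d
          ≤ ∑ d ∈ Finset.range (N+1) \ Finset.range K, (N:ℝ) * bb d :=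
            Finset.sum_le_sum fun d _ => hv_le d
        _ = (N:ℝ) * ∑ d ∈ Finset.range (N+1) \ Finset.range K, bb d := by
            rw [Finset.mul_sum]
        _ ≤ (N:ℝ) * (ε/3) := by
            apply mul_le_mul_of_nonneg_left (le_of_lt hsdiff_bb) hNR.le
  -- E1 bound
  have hE1 : |(∑ d ∈ Finset.range K, v d) / N - ∑ d ∈ Finset.range K, wgt r d| ≤ C / N := by
    have heq : (∑ d ∈ Finset.range K, v d) / N - ∑ d ∈ Finset.range K, wgt r d
        = ∑ d ∈ Finset.range K, (v d / N - wgt r d) := by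
      rw [Finset.sum_sub_distrib, Finset.sum_div]
    rw [heq]
    calc |∑ d ∈ Finset.range K, (v d / N - wgt r d)|
        ≤ ∑ d ∈ Finset.range K, |v d / N - wgt r d| := Finset.abs_sum_le_sum_abs _ _
      _ ≤ ∑ d ∈ Finset.range K, 2 * a d / N := Finset.sum_le_sum fun d _ => hterm d
      _ = C / N := by rw [hC, Finset.sum_div]
  have hCN : C / N < ε/3 := by
    have := hN1 N hN1'
    rw [Real.dist_eq, sub_zero, abs_of_nonneg (by positivity)] at this
    exact this
  -- assemble
  rw [Real.dist_eq]
  have hfinal : TN r N / N - L r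
      = ((∑ d ∈ Finset.range K, v d) / N - ∑ d ∈ Finset.range K, wgt r d)
        + (∑ d ∈ Finset.range (N+1) \ Finset.range K, v d) / N
        - (L r - ∑ d ∈ Finset.range K, wgt r d) := by
    rw [hTN, hsplit]
    field_simp
    ring
  rw [hfinal]
  have h2' : (∑ d ∈ Finset.range (N+1) \ Finset.range K, v d) / N ≤ ε/3 := by
    rw [div_le_iff₀ hNR]
    calc ∑ d ∈ Finset.range (N+1) \ Finset.range K, v d ≤ (N:ℝ) * (ε/3) := hE2.2
      _ = ε/3 * N := by ring
  have h2'' : 0 ≤ (∑ d ∈ Finset.range (N+1) \ Finset.range K, v d) / N :=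
    div_nonneg hE2.1 hNR.le
  have h3' : 0 ≤ L r - ∑ d ∈ Finset.range K, wgt r d := by linarith
  rw [abs_sub_lt_iff]
  constructor
  · have := abs_le.mp hE1
    linarith [this.2]
  · have := abs_le.mp hE1
    linarith [this.1]

lemma ratio_tendsto : Tendsto (fun N : ℕ => TN 0 N / TN 2 N) atTop (nhds 2) := by
  have h0 := TN_tendsto (Or.inl rfl)
  have h2 := TN_tendsto (Or.inr rfl)
  have hL2pos : (0:ℝ) < L 2 := lt_of_lt_of_le (by norm_num) L2_ge
  have hdiv := h0.div h2 (ne_of_gt hL2pos)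
  have hL : L 0 / L 2 = 2 := by rw [L0_eq]; field_simp
  rw [hL] at hdiv
  apply hdiv.congr'
  filter_upwards [eventually_ge_atTop 1] with N hN
  have hN0 : (N:ℝ) ≠ 0 := by
    have : (0:ℝ) < N := by exact_mod_cast hN
    exact this.ne'
  exact div_div_div_cancel_right₀ hN0 _ _


end B6

/-- In base 3 (equivalently base 6), as `G → ∞`, the ratio `T_0(G)/T_2(G)` tends to `2`. -/
theorem base_six_team_zero_ratio_tendsto_two :
    Tendsto (fun G : ℝ => T 0 G / T 2 G) atTop (nhds 2) := by
  have heq : (fun G : ℝ => T 0 G / T 2 G)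
      = (fun N : ℕ => B6.TN 0 N / B6.TN 2 N) ∘ (fun G : ℝ => ⌊G⌋₊) := rfl
  rw [heq]
  exact B6.ratio_tendsto.comp tendsto_nat_floor_atTop
end

section
/- As G tends to infinity, for each residue r in {10, 20}, the ratio V_r(G) / V_2(G) tends to 4/3; that is, in base 30 the residue classes containing the multiples of 10 that are not multiples of 30 each have asymptotic relative population 4/3 times that of the class r = 2. -/
open Filter

/-- The sum of `W(g)` over even integers `g` with `0 < g ≤ G` and `g ≡ r (mod 30)`. -/
noncomputable def V (r : ℕ) (G : ℝ) : ℝ :=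
  ∑ g ∈ (Finset.Icc 1 ⌊G⌋₊).filter (fun g => Even g ∧ g % 30 = r), W g

open Finset

namespace B30

noncomputable def hh (d : ℕ) : ℝ := ∏ q ∈ d.primeFactors, (1 / ((q:ℝ) - 2))

noncomputable def Wp (g : ℕ) : ℝ :=
  ∏ q ∈ g.primeFactors.filter (fun q => ¬ q ∣ 30), (((q : ℝ) - 1) / ((q : ℝ) - 2))

def SS (N : ℕ) : Finset ℕ := (Finset.Icc 1 N).filter (fun d => Squarefree d ∧ Nat.Coprime d 30)

def cnt (r d N : ℕ) : ℕ := ((Finset.Icc 1 N).filter (fun g => g % 30 = r ∧ d ∣ g)).card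

noncomputable def AA (r N : ℕ) : ℝ := ∑ d ∈ SS N, hh d * cnt r d N

lemma prime_dvd_30 {p : ℕ} (hp : p.Prime) : p ∣ 30 ↔ p = 2 ∨ p = 3 ∨ p = 5 := by
  constructor
  · intro h
    have h2 := hp.two_le
    have hle := Nat.le_of_dvd (by norm_num) h
    interval_cases p <;> revert h hp <;> decide
  · rintro (rfl|rfl|rfl) <;> norm_num

lemma seven_le {q : ℕ} (hq : q.Prime) (h30 : ¬ q ∣ 30) : 7 ≤ q := by
  by_contra hlt
  push_neg at hlt
  have h2 := hq.two_le
  interval_cases q <;> revert hq h30 <;> decide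

lemma hh_nonneg (d : ℕ) : 0 ≤ hh d := by
  apply Finset.prod_nonneg
  intro q hq
  have h2 := (Nat.prime_of_mem_primeFactors hq).two_le
  have : (2:ℝ) ≤ q := by exact_mod_cast h2
  have : (0:ℝ) ≤ (q:ℝ) - 2 := by linarith
  exact one_div_nonneg.mpr this

lemma seven_le_of_coprime {d q : ℕ} (hd : Nat.Coprime d 30) (hq : q ∈ d.primeFactors) : 7 ≤ q := by
  have hprime := Nat.prime_of_mem_primeFactors hq
  refine seven_le hprime fun hdvd => ?_
  have hqd : q ∣ d := Nat.dvd_of_mem_primeFactors hq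
  have h1 : q ∣ Nat.gcd d 30 := Nat.dvd_gcd hqd hdvd
  rw [hd] at h1
  exact hprime.ne_one (Nat.dvd_one.mp h1)

lemma sqrt_prod (s : Finset ℕ) : Real.sqrt (∏ q ∈ s, (q:ℝ)) = ∏ q ∈ s, Real.sqrt q := by
  induction s using Finset.cons_induction with
  | empty => simp
  | cons a s ha ih =>
    rw [Finset.prod_cons, Finset.prod_cons, Real.sqrt_mul (by positivity), ih]

lemma hh_le {d : ℕ} (hsq : Squarefree d) (hd : Nat.Coprime d 30) :
    hh d ≤ 1 / Real.sqrt d := by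
  have key : hh d ≤ ∏ q ∈ d.primeFactors, (1 / Real.sqrt q) := by
    apply Finset.prod_le_prod
    · intro q hq
      have h7 : (7:ℝ) ≤ q := by exact_mod_cast seven_le_of_coprime hd hq
      apply one_div_nonneg.mpr; linarith
    · intro q hq
      have h7 : (7:ℝ) ≤ q := by exact_mod_cast seven_le_of_coprime hd hq
      have hs : Real.sqrt q ≤ (q:ℝ) - 2 := by
        rw [show (q:ℝ) - 2 = Real.sqrt (((q:ℝ)-2)^2) from (Real.sqrt_sq (by linarith)).symm]
        apply Real.sqrt_le_sqrt
        nlinarith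
      have hs0 : 0 < Real.sqrt q := Real.sqrt_pos.mpr (by linarith)
      exact one_div_le_one_div_of_le hs0 hs
  calc hh d ≤ ∏ q ∈ d.primeFactors, (1 / Real.sqrt q) := key
    _ = 1 / Real.sqrt d := by
        rw [Finset.prod_div_distrib, Finset.prod_const_one, ← sqrt_prod, ← Nat.cast_prod,
          Nat.prod_primeFactors_of_squarefree hsq]

lemma sum_inv_sqrt (N : ℕ) : ∑ d ∈ Finset.Icc 1 N, 1 / Real.sqrt d ≤ 2 * Real.sqrt N := by
  have h1 : ∑ d ∈ Finset.Icc 1 N, 1 / Real.sqrt d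
      = ∑ i ∈ Finset.range N, 1 / Real.sqrt ((i+1 : ℕ)) := by
    rw [← Finset.Ico_add_one_right_eq_Icc, Finset.sum_Ico_eq_sum_range]
    simp [add_comm]
  rw [h1]
  have h2 : ∀ i ∈ Finset.range N,
      1 / Real.sqrt ((i+1 : ℕ)) ≤ 2 * Real.sqrt ((i+1:ℕ)) - 2 * Real.sqrt i := by
    intro i _
    have hc : ((i+1:ℕ):ℝ) = (i:ℝ) + 1 := by push_cast; ring
    rw [hc]
    have ha : Real.sqrt i ^ 2 = (i:ℝ) := Real.sq_sqrt (by positivity)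
    have hb : Real.sqrt ((i:ℝ)+1) ^ 2 = (i:ℝ)+1 := Real.sq_sqrt (by positivity)
    have hb0 : 0 < Real.sqrt ((i:ℝ)+1) := Real.sqrt_pos.mpr (by positivity)
    have ha0 : 0 ≤ Real.sqrt i := Real.sqrt_nonneg _
    rw [div_le_iff₀ hb0]
    nlinarith [sq_nonneg (Real.sqrt ((i:ℝ)+1) - Real.sqrt i)]
  calc ∑ i ∈ Finset.range N, 1 / Real.sqrt ((i+1:ℕ))
      ≤ ∑ i ∈ Finset.range N, (2 * Real.sqrt ((i+1:ℕ)) - 2 * Real.sqrt i) :=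
        Finset.sum_le_sum h2
    _ = 2 * Real.sqrt N - 2 * Real.sqrt 0 := by
        rw [Finset.sum_range_sub (fun i => 2 * Real.sqrt i)]
        norm_num
    _ ≤ 2 * Real.sqrt N := by simp [Real.sqrt_nonneg]

lemma count_res (m a N : ℕ) (h0 : 0 < a) (ham : a < m) :
    (((Finset.Icc 1 N).filter (fun g => g % m = a)).card) = (N + m - a) / m := by
  have hm : 0 < m := lt_trans h0 ham
  have himg : (Finset.Icc 1 N).filter (fun g => g % m = a)
      = (Finset.range ((N + m - a) / m)).image (fun k => a + k * m) := by
    ext g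
    simp only [Finset.mem_filter, Finset.mem_Icc, Finset.mem_image, Finset.mem_range]
    constructor
    · rintro ⟨⟨h1, h2⟩, h3⟩
      refine ⟨g / m, ?_, ?_⟩
      · have hag : a ≤ g := h3 ▸ Nat.mod_le g m |>.trans_eq rfl |>.trans (le_refl g) |> (fun _ => by
          omega)
        have hgm : g = a + (g / m) * m := by
          conv_lhs => rw [← Nat.mod_add_div g m, h3]
          ring
        have : (g / m) * m ≤ N - a := by omega
        have h4 : g / m ≤ (N - a) / m := Nat.le_div_iff_mul_le hm |>.mpr this
        have h5 : (N + m - a) / m = (N - a) / m + 1 := by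
          have : N + m - a = (N - a) + m := by omega
          rw [this, Nat.add_div_right _ hm]
        omega
      · conv_rhs => rw [← Nat.mod_add_div g m, h3]
        ring
    · rintro ⟨k, hk, rfl⟩
      have h5 : k ≤ (N + m - a) / m - 1 := by omega
      have h6 : a + k * m ≤ N := by
        have t1 : k * m ≤ ((N + m - a) / m - 1) * m := Nat.mul_le_mul_right m h5
        have h7 : ((N + m - a) / m) * m ≤ N + m - a := Nat.div_mul_le_self _ _
        have h8 : 1 ≤ (N + m - a) / m := by omega
        have h10 : ((N + m - a) / m) * m = ((N + m - a) / m - 1) * m + m := by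
          rw [Nat.sub_one_mul]
          have : m ≤ ((N + m - a) / m) * m := by
            calc m = 1 * m := (one_mul m).symm
              _ ≤ ((N + m - a) / m) * m := Nat.mul_le_mul_right m h8
          omega
        omega
      refine ⟨⟨by omega, h6⟩, ?_⟩
      rw [Nat.add_mul_mod_self_right, Nat.mod_eq_of_lt ham]
  rw [himg, Finset.card_image_of_injective _ (fun x y hxy =>
    Nat.eq_of_mul_eq_mul_right hm (Nat.add_left_cancel hxy)), Finset.card_range]

lemma cnt_formula {d : ℕ} (hd : Nat.Coprime d 30) (hd0 : 0 < d) {r N : ℕ}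
    (hrr : r < 30) (hr0 : 0 < r) :
    ∃ a, 0 < a ∧ a < 30 * d ∧ cnt r d N = (N + 30 * d - a) / (30 * d) := by
  have hco : Nat.Coprime 30 d := (Nat.coprime_comm.mp hd)
  set a := ((Nat.chineseRemainder hco r 0 : {k // k ≡ r [MOD 30] ∧ k ≡ 0 [MOD d]}) : ℕ) with ha_def
  have ha30 : a ≡ r [MOD 30] := (Nat.chineseRemainder hco r 0).2.1
  have had : a ≡ 0 [MOD d] := (Nat.chineseRemainder hco r 0).2.2
  have hm0 : (30:ℕ) ≠ 0 := by norm_num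
  have hd0' : d ≠ 0 := hd0.ne'
  have halt : a < 30 * d := Nat.chineseRemainder_lt_mul hco r 0 hm0 hd0'
  have ha0 : 0 < a := by
    rcases Nat.eq_zero_or_pos a with h | h
    · exfalso
      have : a % 30 = r % 30 := ha30
      rw [h, Nat.zero_mod, Nat.mod_eq_of_lt hrr] at this
      omega
    · exact h
  refine ⟨a, ha0, halt, ?_⟩
  have hfe : (Finset.Icc 1 N).filter (fun g => g % 30 = r ∧ d ∣ g)
      = (Finset.Icc 1 N).filter (fun g => g % (30 * d) = a) := by
    apply Finset.filter_congr
    intro g _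
    constructor
    · rintro ⟨h1, h2⟩
      have hg30 : g ≡ r [MOD 30] := by
        unfold Nat.ModEq
        rw [h1, Nat.mod_eq_of_lt hrr]
      have hgd : g ≡ 0 [MOD d] := (Nat.modEq_zero_iff_dvd).mpr h2
      have := Nat.chineseRemainder_modEq_unique hco hg30 hgd
      calc g % (30 * d) = a % (30 * d) := this
        _ = a := Nat.mod_eq_of_lt halt
    · intro h1
      have hga : g ≡ a [MOD 30 * d] := by
        unfold Nat.ModEq
        rw [h1, Nat.mod_eq_of_lt halt]
      constructor
      · have h30 : g ≡ a [MOD 30] := Nat.ModEq.of_mul_right d hga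
        have : g % 30 = a % 30 := h30
        rw [this, ha30, Nat.mod_eq_of_lt hrr]
      · have hdm : g ≡ a [MOD d] := Nat.ModEq.of_mul_left 30 hga
        have : g % d = a % d := hdm
        have ha' : a % d = 0 := Nat.mod_eq_zero_of_dvd (Nat.modEq_zero_iff_dvd.mp had)
        exact Nat.dvd_of_mod_eq_zero (by rw [this, ha'])
  unfold cnt
  rw [hfe]
  exact count_res (30 * d) a N ha0 halt

lemma cnt_bound {d : ℕ} (hd : Nat.Coprime d 30) (hd0 : 0 < d) {r s N : ℕ}
    (hrr : r < 30) (hr0 : 0 < r) (hss : s < 30) (hs0 : 0 < s) :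
    cnt r d N ≤ cnt s d N + 1 := by
  obtain ⟨a, ha0, ham, hae⟩ := cnt_formula hd hd0 hrr hr0 (N := N)
  obtain ⟨b, hb0, hbm, hbe⟩ := cnt_formula hd hd0 hss hs0 (N := N)
  rw [hae, hbe]
  have key : ∀ x y m : ℕ, 0 < m → x ≤ y + m → x / m ≤ y / m + 1 := by
    intro x y m hm hxy
    calc x / m ≤ (y + m) / m := Nat.div_le_div_right hxy
      _ = y / m + 1 := Nat.add_div_right _ hm
  exact key _ _ _ (by positivity) (by omega)

lemma Wp_eq_sum (g : ℕ) (hg : g ≠ 0) :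
    Wp g = ∑ d ∈ g.divisors.filter (fun d => Squarefree d ∧ Nat.Coprime d 30), hh d := by
  classical
  set F : Finset ℕ := g.primeFactors.filter (fun q => ¬ q ∣ 30) with hF
  have hFsub : F ⊆ g.primeFactors := Finset.filter_subset _ _
  have step1 : ∑ d ∈ g.divisors.filter (fun d => Squarefree d ∧ Nat.Coprime d 30), hh d
      = ∑ d ∈ g.divisors.filter Squarefree, (if Nat.Coprime d 30 then hh d else 0) := by
    rw [Finset.sum_filter]
    rw [Finset.sum_filter]
    apply Finset.sum_congr rfl
    intro d _
    by_cases h1 : Squarefree d <;> by_cases h2 : Nat.Coprime d 30 <;> simp [h1, h2]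
  have hnf : (UniqueFactorizationMonoid.normalizedFactors g).toFinset = g.primeFactors := by
    rw [Nat.factors_eq]
    simp
  have step2 : ∑ d ∈ g.divisors.filter Squarefree, (if Nat.Coprime d 30 then hh d else 0)
      = ∑ t ∈ g.primeFactors.powerset,
          (if Nat.Coprime (∏ p ∈ t, p) 30 then hh (∏ p ∈ t, p) else 0) := by
    rw [Nat.sum_divisors_filter_squarefree hg, hnf]
    apply Finset.sum_congr rfl
    intro t _
    rw [Finset.prod_val]
    rfl
  have hiff : ∀ t ∈ g.primeFactors.powerset, (Nat.Coprime (∏ p ∈ t, p) 30 ↔ t ⊆ F) := by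
    intro t ht
    rw [Finset.mem_powerset] at ht
    rw [Nat.coprime_prod_left_iff]
    constructor
    · intro h p hp
      rw [hF, Finset.mem_filter]
      refine ⟨ht hp, ?_⟩
      have hprime := Nat.prime_of_mem_primeFactors (ht hp)
      exact (Nat.Prime.coprime_iff_not_dvd hprime).mp (h p hp)
    · intro h p hp
      have hpF := h hp
      rw [hF, Finset.mem_filter] at hpF
      have hprime := Nat.prime_of_mem_primeFactors hpF.1
      exact (Nat.Prime.coprime_iff_not_dvd hprime).mpr hpF.2
  have step3 : ∑ t ∈ g.primeFactors.powerset,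
          (if Nat.Coprime (∏ p ∈ t, p) 30 then hh (∏ p ∈ t, p) else 0)
      = ∑ t ∈ F.powerset, hh (∏ p ∈ t, p) := by
    rw [Finset.sum_congr rfl (fun t ht => if_congr (hiff t ht) rfl rfl), ← Finset.sum_filter]
    congr 1
    ext t
    simp only [Finset.mem_filter, Finset.mem_powerset]
    exact ⟨fun h => h.2, fun h => ⟨h.trans hFsub, h⟩⟩
  have step4 : ∀ t ∈ F.powerset, hh (∏ p ∈ t, p) = ∏ p ∈ t, (1 / ((p:ℝ) - 2)) := by
    intro t ht
    rw [Finset.mem_powerset] at ht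
    unfold hh
    rw [Nat.primeFactors_prod (fun p hp => Nat.prime_of_mem_primeFactors (hFsub (ht hp)))]
  have step5 : Wp g = ∑ t ∈ F.powerset, ∏ p ∈ t, (1 / ((p:ℝ) - 2)) := by
    unfold Wp
    rw [← hF]
    have : ∀ q ∈ F, ((q : ℝ) - 1) / ((q : ℝ) - 2) = 1 / ((q:ℝ) - 2) + 1 := by
      intro q hq
      rw [hF, Finset.mem_filter] at hq
      have h7 : 7 ≤ q := seven_le (Nat.prime_of_mem_primeFactors hq.1) hq.2
      have h7' : (7:ℝ) ≤ q := by exact_mod_cast h7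
      have hne : (q:ℝ) - 2 ≠ 0 := by linarith
      field_simp
      ring
    rw [Finset.prod_congr rfl this, Finset.prod_add]
    apply Finset.sum_congr rfl
    intro t _
    rw [Finset.prod_const_one, mul_one]
  rw [step5, step1, step2, step3]
  exact Finset.sum_congr rfl (fun t ht => (step4 t ht).symm)

lemma sum_Wp_eq (r N : ℕ) :
    ∑ g ∈ (Finset.Icc 1 N).filter (fun g => g % 30 = r), Wp g = AA r N := by
  classical
  have h1 : ∀ g ∈ (Finset.Icc 1 N).filter (fun g => g % 30 = r),
      Wp g = ∑ d ∈ SS N, (if d ∣ g then hh d else 0) := by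
    intro g hg
    simp only [Finset.mem_filter, Finset.mem_Icc] at hg
    have hg0 : g ≠ 0 := by omega
    rw [Wp_eq_sum g hg0]
    have hset : g.divisors.filter (fun d => Squarefree d ∧ Nat.Coprime d 30)
        = (SS N).filter (fun d => d ∣ g) := by
      ext d
      simp only [Finset.mem_filter, Nat.mem_divisors, SS, Finset.mem_Icc]
      constructor
      · rintro ⟨⟨hdg, -⟩, hsq, hcop⟩
        have hd1 : 1 ≤ d := Nat.one_le_iff_ne_zero.mpr (fun h => by
          subst h; exact hg0 (Nat.eq_zero_of_zero_dvd hdg))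
        exact ⟨⟨⟨hd1, (Nat.le_of_dvd (by omega) hdg).trans hg.1.2⟩, hsq, hcop⟩, hdg⟩
      · rintro ⟨⟨⟨hd1, hdN⟩, hsq, hcop⟩, hdg⟩
        exact ⟨⟨hdg, hg0⟩, hsq, hcop⟩
    rw [hset, Finset.sum_filter]
  rw [Finset.sum_congr rfl h1, Finset.sum_comm]
  unfold AA
  apply Finset.sum_congr rfl
  intro d _
  rw [← Finset.sum_filter, Finset.sum_const, Finset.filter_filter]
  unfold cnt
  rw [nsmul_eq_mul, mul_comm]

lemma V_filter_eq (r : ℕ) (hr2 : r % 2 = 0) (N : ℕ) :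
    (Finset.Icc 1 N).filter (fun g => Even g ∧ g % 30 = r)
      = (Finset.Icc 1 N).filter (fun g => g % 30 = r) := by
  apply Finset.filter_congr
  intro g _
  constructor
  · exact fun h => h.2
  · intro h
    refine ⟨?_, h⟩
    rw [Nat.even_iff]
    have : g % 2 = g % 30 % 2 := (Nat.mod_mod_of_dvd g (by norm_num)).symm
    rw [this, h, hr2]

lemma V_eq_two (G : ℝ) : V 2 G = AA 2 ⌊G⌋₊ := by
  unfold V
  rw [V_filter_eq 2 (by norm_num), ← sum_Wp_eq 2 ⌊G⌋₊]
  apply Finset.sum_congr rfl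
  intro g hg
  simp only [Finset.mem_filter, Finset.mem_Icc] at hg
  -- W g = Wp g here
  unfold W Wp
  apply Finset.prod_congr _ (fun _ _ => rfl)
  apply Finset.filter_congr
  intro q hq
  have hprime := Nat.prime_of_mem_primeFactors hq
  have hqg : q ∣ g := Nat.dvd_of_mem_primeFactors hq
  constructor
  · intro hq2 hq30
    rcases (prime_dvd_30 hprime).mp hq30 with h | h | h
    · exact hq2 h
    · subst h
      have h0 : g % 3 = 0 := by obtain ⟨k, rfl⟩ := hqg; simp [Nat.mul_mod_right]
      have h3 : g % 3 = g % 30 % 3 := (Nat.mod_mod_of_dvd g (by norm_num)).symm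
      rw [hg.2] at h3
      omega
    · subst h
      have h0 : g % 5 = 0 := by obtain ⟨k, rfl⟩ := hqg; simp [Nat.mul_mod_right]
      have h5 : g % 5 = g % 30 % 5 := (Nat.mod_mod_of_dvd g (by norm_num)).symm
      rw [hg.2] at h5
      omega
  · intro h30
    intro h2
    subst h2
    exact h30 (by norm_num)

lemma V_eq_ten (r : ℕ) (hr : r = 10 ∨ r = 20) (G : ℝ) : V r G = (4/3) * AA r ⌊G⌋₊ := by
  have hr2 : r % 2 = 0 := by rcases hr with rfl | rfl <;> norm_num
  unfold V
  rw [V_filter_eq r hr2, ← sum_Wp_eq r ⌊G⌋₊, Finset.mul_sum]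
  apply Finset.sum_congr rfl
  intro g hg
  simp only [Finset.mem_filter, Finset.mem_Icc] at hg
  have hg0 : g ≠ 0 := by omega
  have h5g : 5 ∣ g := by
    have h5 : g % 5 = g % 30 % 5 := (Nat.mod_mod_of_dvd g (by norm_num)).symm
    rw [hg.2] at h5
    apply Nat.dvd_of_mod_eq_zero
    rcases hr with rfl | rfl <;> omega
  have h3g : ¬ (3 ∣ g) := by
    intro h3
    have h3' : g % 3 = g % 30 % 3 := (Nat.mod_mod_of_dvd g (by norm_num)).symm
    rw [hg.2] at h3'
    have h0 : g % 3 = 0 := by obtain ⟨k, rfl⟩ := h3; simp [Nat.mul_mod_right]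
    rcases hr with rfl | rfl <;> omega
  have hsplit : g.primeFactors.filter (fun q => q ≠ 2)
      = insert 5 (g.primeFactors.filter (fun q => ¬ q ∣ 30)) := by
    ext q
    simp only [Finset.mem_filter, Finset.mem_insert]
    constructor
    · rintro ⟨hq, hq2⟩
      have hprime := Nat.prime_of_mem_primeFactors hq
      have hqg : q ∣ g := Nat.dvd_of_mem_primeFactors hq
      by_cases h30 : q ∣ 30
      · rcases (prime_dvd_30 hprime).mp h30 with h | h | h
        · exact absurd h hq2
        · exact absurd (h ▸ hqg) h3g
        · left; exact h
      · right; exact ⟨hq, h30⟩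
    · rintro (rfl | ⟨hq, h30⟩)
      · refine ⟨Nat.mem_primeFactors.mpr ⟨by norm_num, h5g, hg0⟩, by norm_num⟩
      · refine ⟨hq, fun h2 => h30 (h2 ▸ by norm_num)⟩
  unfold W Wp
  rw [hsplit, Finset.prod_insert (by
    simp only [Finset.mem_filter]
    rintro ⟨-, h⟩
    exact h (by norm_num))]
  norm_num

lemma AA_diff (r N : ℕ) (hrr : r < 30) (hr0 : 0 < r) :
    |AA r N - AA 2 N| ≤ 2 * Real.sqrt N := by
  unfold AA
  rw [← Finset.sum_sub_distrib]
  calc |∑ d ∈ SS N, (hh d * cnt r d N - hh d * cnt 2 d N)|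
      ≤ ∑ d ∈ SS N, |hh d * cnt r d N - hh d * cnt 2 d N| := Finset.abs_sum_le_sum_abs _ _
    _ ≤ ∑ d ∈ SS N, hh d := by
        apply Finset.sum_le_sum
        intro d hd
        simp only [SS, Finset.mem_filter, Finset.mem_Icc] at hd
        obtain ⟨⟨hd1, hdN⟩, hsq, hcop⟩ := hd
        have hd0 : 0 < d := hd1
        have hb1 : cnt r d N ≤ cnt 2 d N + 1 := cnt_bound hcop hd0 hrr hr0 (by norm_num) (by norm_num)
        have hb2 : cnt 2 d N ≤ cnt r d N + 1 := cnt_bound hcop hd0 (by norm_num) (by norm_num) hrr hr0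
        have habs : |(cnt r d N : ℝ) - cnt 2 d N| ≤ 1 := by
          have c1 : (cnt r d N : ℝ) ≤ (cnt 2 d N : ℝ) + 1 := by exact_mod_cast hb1
          have c2 : (cnt 2 d N : ℝ) ≤ (cnt r d N : ℝ) + 1 := by exact_mod_cast hb2
          rw [abs_le]
          constructor <;> linarith
        rw [← mul_sub, abs_mul, abs_of_nonneg (hh_nonneg d)]
        calc hh d * |(cnt r d N : ℝ) - cnt 2 d N| ≤ hh d * 1 :=
              mul_le_mul_of_nonneg_left habs (hh_nonneg d)
          _ = hh d := mul_one _
    _ ≤ ∑ d ∈ SS N, 1 / Real.sqrt d := by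
        apply Finset.sum_le_sum
        intro d hd
        simp only [SS, Finset.mem_filter, Finset.mem_Icc] at hd
        exact hh_le hd.2.1 hd.2.2
    _ ≤ ∑ d ∈ Finset.Icc 1 N, 1 / Real.sqrt d := by
        apply Finset.sum_le_sum_of_subset_of_nonneg (Finset.filter_subset _ _)
        intro d _ _
        positivity
    _ ≤ 2 * Real.sqrt N := sum_inv_sqrt N

lemma AA_lower (N : ℕ) : (N : ℝ) / 30 - 1 ≤ AA 2 N := by
  rcases Nat.eq_zero_or_pos N with rfl | hN
  · simp [AA, SS]
  have h1 : (1 : ℕ) ∈ SS N := by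
    simp only [SS, Finset.mem_filter, Finset.mem_Icc]
    exact ⟨⟨le_refl 1, hN⟩, squarefree_one, Nat.coprime_one_left 30⟩
  have hterm : ∀ d ∈ SS N, 0 ≤ hh d * cnt 2 d N := by
    intro d _
    exact mul_nonneg (hh_nonneg d) (Nat.cast_nonneg _)
  have hsingle : hh 1 * cnt 2 1 N ≤ AA 2 N := Finset.single_le_sum hterm h1
  have hh1 : hh 1 = 1 := by simp [hh]
  have hcnt : cnt 2 1 N = (N + 28) / 30 := by
    have hfe : (Finset.Icc 1 N).filter (fun g => g % 30 = 2 ∧ 1 ∣ g)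
        = (Finset.Icc 1 N).filter (fun g => g % 30 = 2) := by
      apply Finset.filter_congr
      intro g _
      simp
    unfold cnt
    rw [hfe, count_res 30 2 N (by norm_num) (by norm_num)]
    congr 1
  rw [hh1, one_mul, hcnt] at hsingle
  refine le_trans ?_ hsingle
  have hdm := Nat.div_add_mod (N + 28) 30
  have hlt : (N + 28) % 30 < 30 := Nat.mod_lt _ (by norm_num)
  have : (30 : ℝ) * ((N + 28) / 30 : ℕ) + ((N + 28) % 30 : ℕ) = (N : ℝ) + 28 := by
    exact_mod_cast congrArg (Nat.cast : ℕ → ℝ) hdm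
  have h2 : ((N + 28) % 30 : ℕ) < (30:ℝ) := by exact_mod_cast hlt
  linarith

lemma sqrt_nat_tendsto : Tendsto (fun N : ℕ => Real.sqrt N) atTop atTop := by
  apply tendsto_atTop_atTop_of_monotone
  · intro a b hab
    exact Real.sqrt_le_sqrt (by exact_mod_cast hab)
  · intro b
    refine ⟨⌈b^2⌉₊, ?_⟩
    calc b ≤ |b| := le_abs_self b
      _ = Real.sqrt (b^2) := (Real.sqrt_sq_eq_abs b).symm
      _ ≤ Real.sqrt (⌈b^2⌉₊) := Real.sqrt_le_sqrt (Nat.le_ceil _)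

lemma tendsto_ratio (r : ℕ) (hrr : r < 30) (hr0 : 0 < r) :
    Tendsto (fun N : ℕ => AA r N / AA 2 N) atTop (nhds 1) := by
  have herr : Tendsto (fun N : ℕ => 120 / Real.sqrt N) atTop (nhds 0) := by
    simpa [div_eq_mul_inv] using sqrt_nat_tendsto.inv_tendsto_atTop.const_mul (120 : ℝ)
  have hlow : Tendsto (fun N : ℕ => 1 - 120 / Real.sqrt N) atTop (nhds 1) := by
    simpa using (tendsto_const_nhds (x := (1:ℝ)) (f := atTop (α := ℕ))).sub herr
  have hhigh : Tendsto (fun N : ℕ => 1 + 120 / Real.sqrt N) atTop (nhds 1) := by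
    simpa using (tendsto_const_nhds (x := (1:ℝ)) (f := atTop (α := ℕ))).add herr
  apply tendsto_of_tendsto_of_tendsto_of_le_of_le' hlow hhigh
  · -- eventually lower bound
    filter_upwards [Filter.eventually_atTop.mpr ⟨3600, fun N hN => hN⟩] with N hN
    have key : |AA r N / AA 2 N - 1| ≤ 120 / Real.sqrt N := by
      have hA2 : (N : ℝ) / 30 - 1 ≤ AA 2 N := AA_lower N
      have hNR : (3600 : ℝ) ≤ N := by exact_mod_cast hN
      have hA2pos : (N : ℝ) / 60 ≤ AA 2 N := by linarith
      have hA2pos' : 0 < AA 2 N := lt_of_lt_of_le (by linarith) hA2pos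
      have hdiff : |AA r N - AA 2 N| ≤ 2 * Real.sqrt N := AA_diff r N hrr hr0
      have heq : AA r N / AA 2 N - 1 = (AA r N - AA 2 N) / AA 2 N := by
        field_simp
      rw [heq, abs_div, abs_of_pos hA2pos']
      rw [div_le_div_iff₀ hA2pos' (by positivity)]
      have hsq60 : 60 ≤ Real.sqrt N := by
        have : Real.sqrt 3600 ≤ Real.sqrt N := Real.sqrt_le_sqrt hNR
        rw [show (3600:ℝ) = 60^2 by norm_num, Real.sqrt_sq (by norm_num)] at this
        exact this
      have hsqN : Real.sqrt N * Real.sqrt N = (N:ℝ) := Real.mul_self_sqrt (by positivity)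
      calc |AA r N - AA 2 N| * Real.sqrt N ≤ (2 * Real.sqrt N) * Real.sqrt N :=
            mul_le_mul_of_nonneg_right hdiff (Real.sqrt_nonneg _)
        _ = 2 * (N:ℝ) := by rw [mul_assoc, hsqN]
        _ ≤ 120 * AA 2 N := by linarith
    have := abs_le.mp key
    linarith [this.1]
  · filter_upwards [Filter.eventually_atTop.mpr ⟨3600, fun N hN => hN⟩] with N hN
    have key : |AA r N / AA 2 N - 1| ≤ 120 / Real.sqrt N := by
      have hA2 : (N : ℝ) / 30 - 1 ≤ AA 2 N := AA_lower N
      have hNR : (3600 : ℝ) ≤ N := by exact_mod_cast hN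
      have hA2pos : (N : ℝ) / 60 ≤ AA 2 N := by linarith
      have hA2pos' : 0 < AA 2 N := lt_of_lt_of_le (by linarith) hA2pos
      have hdiff : |AA r N - AA 2 N| ≤ 2 * Real.sqrt N := AA_diff r N hrr hr0
      have heq : AA r N / AA 2 N - 1 = (AA r N - AA 2 N) / AA 2 N := by
        field_simp
      rw [heq, abs_div, abs_of_pos hA2pos']
      rw [div_le_div_iff₀ hA2pos' (by positivity)]
      have hsqN : Real.sqrt N * Real.sqrt N = (N:ℝ) := Real.mul_self_sqrt (by positivity)
      calc |AA r N - AA 2 N| * Real.sqrt N ≤ (2 * Real.sqrt N) * Real.sqrt N :=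
            mul_le_mul_of_nonneg_right hdiff (Real.sqrt_nonneg _)
        _ = 2 * (N:ℝ) := by rw [mul_assoc, hsqN]
        _ ≤ 120 * AA 2 N := by linarith
    have := abs_le.mp key
    linarith [this.2]

end B30

/-- In base 30, as `G → ∞`, for `r ∈ {10, 20}`, the ratio `V_r(G)/V_2(G)` tends to `4/3`. -/
theorem base_thirty_multiples_of_ten_ratio (r : ℕ) (hr : r ∈ ({10, 20} : Finset ℕ)) :
    Tendsto (fun G : ℝ => V r G / V 2 G) atTop (nhds (4 / 3)) := by
  have hr' : r = 10 ∨ r = 20 := by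
    simpa [Finset.mem_insert, Finset.mem_singleton] using hr
  have hrr : r < 30 := by rcases hr' with rfl | rfl <;> norm_num
  have hr0 : 0 < r := by rcases hr' with rfl | rfl <;> norm_num
  have hfun : ∀ G : ℝ, V r G / V 2 G = (4/3) * (B30.AA r ⌊G⌋₊ / B30.AA 2 ⌊G⌋₊) := by
    intro G
    rw [B30.V_eq_ten r hr' G, B30.V_eq_two G, mul_div_assoc]
  have hcomp : Tendsto (fun G : ℝ => B30.AA r ⌊G⌋₊ / B30.AA 2 ⌊G⌋₊) atTop (nhds 1) :=
    (B30.tendsto_ratio r hrr hr0).comp tendsto_nat_floor_atTop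
  have := hcomp.const_mul (4/3 : ℝ)
  rw [mul_one] at this
  simpa only [hfun] using this
end

section
/- Let p be a prime and N = p# its primorial, and let g be a positive even integer. Then the number of integers x with 0 ≤ x < N such that both x and x + g are coprime to N equals (∏_{q odd prime, q ≤ p, q ∣ g} (q-1)) · (∏_{q odd prime, q ≤ p, q ∤ g} (q-2)). -/
open Finset

/-- The primorial `p#`: the product of all primes `q ≤ p`. -/
def primorial' (p : ℕ) : ℕ := ∏ q ∈ (Finset.range (p + 1)).filter Nat.Prime, q


lemma isUnit_prod_iff' {M N : Type*} [Monoid M] [Monoid N] {z : M × N} :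
    IsUnit z ↔ IsUnit z.1 ∧ IsUnit z.2 := by
  constructor
  · intro h
    exact ⟨h.map (MonoidHom.fst M N), h.map (MonoidHom.snd M N)⟩
  · rintro ⟨⟨u, hu⟩, ⟨v, hv⟩⟩
    refine ⟨⟨((u : M), (v : N)), ((↑u⁻¹ : M), (↑v⁻¹ : N)), ?_, ?_⟩, ?_⟩
    · ext <;> simp
    · ext <;> simp
    · ext <;> simp [hu, hv]

noncomputable def twinCnt (g n : ℕ) : ℕ :=
  Nat.card {x : ZMod n // IsUnit x ∧ IsUnit (x + (g : ℕ))}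

lemma twinCnt_eq (g n : ℕ) [NeZero n] :
    ((Finset.range n).filter
        (fun x => Nat.Coprime x n ∧ Nat.Coprime (x + g) n)).card = twinCnt g n := by
  classical
  rw [twinCnt, Nat.card_eq_fintype_card, Fintype.card_subtype]
  apply Finset.card_bij (fun x _ => ((x : ℕ) : ZMod n))
  · intro a ha
    simp only [mem_filter, mem_range] at ha
    simp only [mem_filter, mem_univ, true_and]
    refine ⟨(ZMod.isUnit_iff_coprime a n).mpr ha.2.1, ?_⟩
    have := (ZMod.isUnit_iff_coprime (a + g) n).mpr ha.2.2
    push_cast at this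
    exact this
  · intro a ha b hb hab
    simp only [mem_filter, mem_range] at ha hb
    have : ((a : ZMod n)).val = ((b : ZMod n)).val := by rw [hab]
    rwa [ZMod.val_cast_of_lt ha.1, ZMod.val_cast_of_lt hb.1] at this
  · intro y hy
    simp only [mem_filter, mem_univ, true_and] at hy
    refine ⟨y.val, ?_, ZMod.natCast_rightInverse y⟩
    simp only [mem_filter, mem_range]
    refine ⟨ZMod.val_lt y, ?_, ?_⟩
    · rw [← ZMod.isUnit_iff_coprime, ZMod.natCast_rightInverse y]
      exact hy.1
    · rw [← ZMod.isUnit_iff_coprime]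
      push_cast
      rw [ZMod.natCast_rightInverse y]
      exact hy.2

lemma twinCnt_mul (g m n : ℕ) (h : Nat.Coprime m n) :
    twinCnt g (m * n) = twinCnt g m * twinCnt g n := by
  classical
  rw [twinCnt, twinCnt, twinCnt, ← Nat.card_prod]
  apply Nat.card_congr
  refine (Equiv.subtypeEquiv (ZMod.chineseRemainder h).toEquiv ?_).trans
    (Equiv.subtypeProdEquivProd (p := fun a : ZMod m => IsUnit a ∧ IsUnit (a + (g : ℕ)))
      (q := fun b : ZMod n => IsUnit b ∧ IsUnit (b + (g : ℕ))))
  intro x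
  set e := ZMod.chineseRemainder h
  have hmap : e (x + (g : ZMod (m * n))) = e x + ((g : ZMod m), (g : ZMod n)) := by
    rw [map_add, map_natCast]
    rfl
  have hfst : (e x + ((g : ZMod m), (g : ZMod n))).1 = (e x).1 + (g : ZMod m) := rfl
  have hsnd : (e x + ((g : ZMod m), (g : ZMod n))).2 = (e x).2 + (g : ZMod n) := rfl
  have hu : IsUnit x ↔ IsUnit (e x) := by
    constructor
    · exact fun hx => hx.map e
    · intro hx
      have := hx.map e.symm
      rwa [RingEquiv.symm_apply_apply] at this
  have hu2 : IsUnit (x + (g : ZMod (m * n))) ↔ IsUnit (e x + ((g : ZMod m), (g : ZMod n))) := by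
    rw [← hmap]
    constructor
    · exact fun hx => hx.map e
    · intro hx
      have := hx.map e.symm
      rwa [RingEquiv.symm_apply_apply] at this
  rw [hu, hu2, isUnit_prod_iff', isUnit_prod_iff', hfst, hsnd]
  show _ ↔ (IsUnit (e x).1 ∧ IsUnit ((e x).1 + _)) ∧ IsUnit (e x).2 ∧ IsUnit ((e x).2 + _)
  tauto

lemma twinCnt_prime (g q : ℕ) (hq : q.Prime) :
    twinCnt g q = if q ∣ g then q - 1 else q - 2 := by
  classical
  haveI : NeZero q := ⟨hq.ne_zero⟩
  haveI : Fact q.Prime := ⟨hq⟩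
  rw [twinCnt, Nat.card_eq_fintype_card, Fintype.card_subtype]
  by_cases hdvd : q ∣ g
  · have hg0 : (g : ZMod q) = 0 := (ZMod.natCast_eq_zero_iff g q).mpr hdvd
    rw [if_pos hdvd]
    rw [show (Finset.univ.filter fun x : ZMod q => IsUnit x ∧ IsUnit (x + (g : ℕ)))
        = Finset.univ \ {0} by
      ext x; simp [hg0, isUnit_iff_ne_zero]]
    rw [Finset.card_sdiff_of_subset (by simp), Finset.card_singleton, Finset.card_univ, ZMod.card]
  · have hg0 : (g : ZMod q) ≠ 0 := fun h => hdvd ((ZMod.natCast_eq_zero_iff g q).mp h)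
    rw [if_neg hdvd]
    rw [show (Finset.univ.filter fun x : ZMod q => IsUnit x ∧ IsUnit (x + (g : ℕ)))
        = Finset.univ \ {0, -(g : ZMod q)} by
      ext x
      simp only [mem_filter, mem_univ, true_and, Finset.mem_sdiff, Finset.mem_insert,
        Finset.mem_singleton, isUnit_iff_ne_zero, not_or]
      constructor
      · rintro ⟨h1, h2⟩
        exact ⟨h1, fun hx => h2 (by rw [hx, neg_add_cancel])⟩
      · rintro ⟨h1, h2⟩
        exact ⟨h1, fun h => h2 (by linear_combination h)⟩]
    rw [Finset.card_sdiff_of_subset (by simp), Finset.card_univ, ZMod.card,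
      Finset.card_pair (fun h => hg0 (neg_eq_zero.mp h.symm))]

lemma twinCnt_prod (g : ℕ) (s : Finset ℕ) (hs : ∀ q ∈ s, q.Prime) :
    twinCnt g (∏ q ∈ s, q) = ∏ q ∈ s, if q ∣ g then q - 1 else q - 2 := by
  classical
  induction s using Finset.induction with
  | empty =>
      simp only [Finset.prod_empty]
      rw [twinCnt]
      haveI : Unique {x : ZMod 1 // IsUnit x ∧ IsUnit (x + (g : ℕ))} :=
        ⟨⟨⟨0, isUnit_of_subsingleton _, isUnit_of_subsingleton _⟩⟩,
          fun _ => Subtype.ext (Subsingleton.elim _ _)⟩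
      exact Nat.card_unique
  | insert _ _ ha ih =>
      rename_i a s'
      have hps : ∀ q ∈ s', q.Prime := fun q hq => hs q (Finset.mem_insert_of_mem hq)
      have hpa : a.Prime := hs a (Finset.mem_insert_self a s')
      have hcop : Nat.Coprime a (∏ q ∈ s', q) := by
        apply Nat.Coprime.prod_right
        intro q hq
        exact (Nat.coprime_primes hpa (hps q hq)).mpr (fun h => ha (h ▸ hq))
      rw [Finset.prod_insert ha, Finset.prod_insert ha, twinCnt_mul g a _ hcop,
        twinCnt_prime g a hpa, ih hps]

/-- For a prime `p` with primorial `N = p#` and a positive even `g`, the number of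
`x` with `0 ≤ x < N` such that both `x` and `x + g` are coprime to `N` equals
`(∏_{q odd prime, q ≤ p, q ∣ g} (q-1)) · (∏_{q odd prime, q ≤ p, q ∤ g} (q-2))`. -/
theorem count_coprime_pairs (p : ℕ) (hp : p.Prime) (g : ℕ) (hg : 0 < g) (hge : Even g) :
    ((Finset.range (primorial' p)).filter
        (fun x => Nat.Coprime x (primorial' p) ∧ Nat.Coprime (x + g) (primorial' p))).card
      = (∏ q ∈ (Finset.range (p + 1)).filter (fun q => q.Prime ∧ q ≠ 2 ∧ q ∣ g), (q - 1))
        * ∏ q ∈ (Finset.range (p + 1)).filter (fun q => q.Prime ∧ q ≠ 2 ∧ ¬ q ∣ g), (q - 2) := by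
  classical
  set s := (Finset.range (p + 1)).filter Nat.Prime with hs
  have hsp : ∀ q ∈ s, q.Prime := fun q hq => (Finset.mem_filter.mp hq).2
  haveI : NeZero (primorial' p) :=
    ⟨Finset.prod_ne_zero_iff.mpr fun q hq => (hsp q hq).ne_zero⟩
  have h2g : 2 ∣ g := hge.two_dvd
  rw [twinCnt_eq, show primorial' p = ∏ q ∈ s, q from rfl, twinCnt_prod g s hsp]
  rw [← Finset.prod_filter_mul_prod_filter_not s (fun q => q ∣ g)]
  congr 1
  · have hins : s.filter (fun q => q ∣ g)
        = insert 2 ((Finset.range (p + 1)).filter (fun q => q.Prime ∧ q ≠ 2 ∧ q ∣ g)) := by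
      ext q
      simp only [hs, Finset.mem_filter, Finset.mem_insert, Finset.mem_range,
        Finset.filter_filter]
      have h2p : 2 < p + 1 := Nat.lt_succ_of_le hp.two_le
      have hp2 := Nat.prime_two
      by_cases hq2 : q = 2 <;> [subst hq2; skip] <;> tauto
    rw [hins, Finset.prod_insert (by simp), Finset.prod_congr rfl
      (fun q hq => if_pos (Finset.mem_filter.mp hq).2.2.2)]
    rw [if_pos h2g]
    norm_num
  · refine Finset.prod_congr ?_ fun q hq => if_neg (Finset.mem_filter.mp hq).2.2.2
    ext q
    simp only [hs, Finset.mem_filter, Finset.mem_range, Finset.filter_filter]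
    have : q = 2 → q ∣ g := fun h => h ▸ h2g
    tauto
end
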